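/- arXiv:1410.7188 — 8 statements merged into one kernel-verified Lean document; each statement's English description precedes it below -/
import Mathlib

section
/- Let P be a positive semidefinite n×n complex matrix of rank r, and suppose P = ∑_{i=1}^r v_i v_i* = ∑_{i=1}^m w_i w_i* are two decompositions into rank-one matrices with v_i, w_i ∈ ℂ^n. Then there exists an m×r matrix U with U*U = I_r such that w_i = ∑_{j=1}^r U_{ij} v_j for all 1 ≤ i ≤ m. -/
/-!
Put the vectors as rows of matrices `V` and `W`, so that the hypothesis says `Wᴴ W = Vᴴ V` (up to
transposition) and the rank condition says that `V` has independent rows, i.e. `G = V Vᴴ` is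
invertible. Equal Gram matrices force `ker V ⊆ ker W`; as `Vᴴ G⁻¹ V` is the projection onto the
row space of `V`, `W = W Vᴴ G⁻¹ V`, and `U = W Vᴴ G⁻¹` is an isometry since
`Uᴴ U = G⁻¹ V (Wᴴ W) Vᴴ G⁻¹ = G⁻¹ G G G⁻¹ = 1`.
-/

open Matrix
open scoped ComplexOrder

namespace Matrix

theorem isUnit_of_rank_eq_card {n K : Type*} [Fintype n] [DecidableEq n] [Field K]
    {A : Matrix n n K} (h : A.rank = Fintype.card n) : IsUnit A := by
  refine mulVec_surjective_iff_isUnit.1 (LinearMap.range_eq_top (f := A.mulVecLin).1 ?_)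
  exact Submodule.eq_top_of_finrank_eq (by simpa [rank] using h)

theorem sum_vecMulVec_self_star {ι n R : Type*} [Fintype ι] [CommSemiring R] [StarRing R]
    (v : ι → n → R) : ∑ i, vecMulVec (v i) (star (v i)) = ((of v)ᴴ * of v)ᵀ := by
  ext k l
  simp [sum_apply, mul_apply, vecMulVec_apply, mul_comm]

section StarOrderedField

variable {m n r R : Type*} [Fintype m] [Fintype n] [Fintype r]
  [Field R] [PartialOrder R] [StarRing R] [StarOrderedRing R]

theorem mul_eq_zero_of_conjTranspose_mul_self_eq {p : Type*} {V : Matrix r n R}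
    {W : Matrix m n R} (hVW : Wᴴ * W = Vᴴ * V) {X : Matrix n p R} (hX : V * X = 0) :
    W * X = 0 := by
  rwa [← conjTranspose_mul_self_mul_eq_zero, hVW, conjTranspose_mul_self_mul_eq_zero]

theorem exists_isometry_mul_eq_of_conjTranspose_mul_self_eq [DecidableEq r] {V : Matrix r n R}
    {W : Matrix m n R} (hVW : Wᴴ * W = Vᴴ * V) (hV : IsUnit (V * Vᴴ)) :
    ∃ U : Matrix m r R, Uᴴ * U = 1 ∧ W = U * V := by
  set G := V * Vᴴ
  have hG : IsUnit G.det := (isUnit_iff_isUnit_det G).1 hV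
  have hGinv : (G⁻¹)ᴴ = G⁻¹ := by
    rw [conjTranspose_nonsing_inv, (isHermitian_mul_conjTranspose_self V).eq]
  refine ⟨W * Vᴴ * G⁻¹, ?_, ?_⟩
  · calc (W * Vᴴ * G⁻¹)ᴴ * (W * Vᴴ * G⁻¹) = G⁻¹ * V * (Wᴴ * W) * Vᴴ * G⁻¹ := by
          simp only [conjTranspose_mul, conjTranspose_conjTranspose, hGinv, Matrix.mul_assoc]
      _ = (G⁻¹ * G) * (G * G⁻¹) := by simp only [hVW, G, Matrix.mul_assoc]
      _ = 1 := by rw [nonsing_inv_mul G hG, mul_nonsing_inv G hG, Matrix.one_mul]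
  · classical
    have hproj : V * (1 - Vᴴ * G⁻¹ * V) = 0 := by
      rw [Matrix.mul_sub, Matrix.mul_one, ← Matrix.mul_assoc, ← Matrix.mul_assoc,
        mul_nonsing_inv G hG, Matrix.one_mul, sub_self]
    have hW := mul_eq_zero_of_conjTranspose_mul_self_eq hVW hproj
    rwa [Matrix.mul_sub, Matrix.mul_one, sub_eq_zero, ← Matrix.mul_assoc, ← Matrix.mul_assoc]
      at hW

end StarOrderedField

end Matrix

theorem stmt_0_general (n r m : ℕ) (P : Matrix (Fin n) (Fin n) ℂ)
    (hrank : P.rank = r)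
    (v : Fin r → Fin n → ℂ) (w : Fin m → Fin n → ℂ)
    (hv : P = ∑ i, Matrix.vecMulVec (v i) (star (v i)))
    (hw : P = ∑ i, Matrix.vecMulVec (w i) (star (w i))) :
    ∃ U : Matrix (Fin m) (Fin r) ℂ, Uᴴ * U = 1 ∧ ∀ i, w i = ∑ j, U i j • v j := by
  rw [sum_vecMulVec_self_star] at hv hw
  have hgram : (of w)ᴴ * of w = (of v)ᴴ * of v := transpose_injective (hw.symm.trans hv)
  have hV : IsUnit (of v * (of v)ᴴ) := by
    refine isUnit_of_rank_eq_card ?_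
    rw [rank_self_mul_conjTranspose, Fintype.card_fin, ← rank_conjTranspose_mul_self,
      ← rank_transpose, ← hv, hrank]
  obtain ⟨U, hU, hWUV⟩ := exists_isometry_mul_eq_of_conjTranspose_mul_self_eq hgram hV
  refine ⟨U, hU, fun i => ?_⟩
  have hrow := congrFun hWUV i
  rwa [mul_apply_eq_vecMul, vecMul_eq_sum] at hrow

theorem stmt_0 (n r m : ℕ) (P : Matrix (Fin n) (Fin n) ℂ)
    (hP : P.PosSemidef) (hrank : P.rank = r)
    (v : Fin r → Fin n → ℂ) (w : Fin m → Fin n → ℂ)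
    (hv : P = ∑ i, Matrix.vecMulVec (v i) (star (v i)))
    (hw : P = ∑ i, Matrix.vecMulVec (w i) (star (w i))) :
    ∃ U : Matrix (Fin m) (Fin r) ℂ, Uᴴ * U = 1 ∧ ∀ i, w i = ∑ j, U i j • v j :=
  stmt_0_general n r m P hrank v w hv hw
end

section
/- Let A, B be bounded operators on a Hilbert space H with B*B ≤ A*A (in the Loewner order). Then there exists a bounded operator C from the closure of the range of A to the closure of the range of B with ‖C‖ ≤ 1 and C∘A = B. -/
/-!
Testing `B*B ≤ A*A` on `x` gives `‖B x‖² = ⟪B*B x, x⟫ ≤ ⟪A*A x, x⟫ = ‖A x‖²`. Hence `A x ↦ B x` is a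
well-defined contraction on the range of `A`, and being uniformly continuous it extends to the
closure of that range, with values in the (complete) closure of the range of `B`.
-/

open ContinuousLinearMap

theorem ContinuousLinearMap.norm_apply_le_of_isPositive_adjoint_comp_sub
    {𝕜 E F G : Type*} [RCLike 𝕜] [NormedAddCommGroup E] [InnerProductSpace 𝕜 E] [CompleteSpace E]
    [NormedAddCommGroup F] [InnerProductSpace 𝕜 F] [CompleteSpace F]
    [NormedAddCommGroup G] [InnerProductSpace 𝕜 G] [CompleteSpace G]
    {A : E →L[𝕜] F} {B : E →L[𝕜] G} (h : (adjoint A ∘L A - adjoint B ∘L B).IsPositive) (x : E) :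
    ‖B x‖ ≤ ‖A x‖ := by
  have hsq := h.re_inner_nonneg_left x
  rw [sub_apply, inner_sub_left, map_sub, ← apply_norm_sq_eq_inner_adjoint_left,
    ← apply_norm_sq_eq_inner_adjoint_left, sub_nonneg] at hsq
  exact (pow_le_pow_iff_left₀ (norm_nonneg _) (norm_nonneg _) two_ne_zero).mp hsq

theorem LinearMap.denseRange_codRestrict_topologicalClosure
    {R M N : Type*} [Semiring R] [AddCommMonoid M] [Module R M] [AddCommMonoid N] [Module R N]
    [TopologicalSpace N] [ContinuousAdd N] [ContinuousConstSMul R N] (f : M →ₗ[R] N) :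
    DenseRange (f.codRestrict (LinearMap.range f).topologicalClosure
      fun x ↦ Submodule.le_topologicalClosure _ (LinearMap.mem_range_self f x)) := by
  rw [DenseRange, Subtype.dense_iff, ← Set.range_comp]
  exact subset_rfl

/-- **Douglas' factorization theorem.** If `B*B ≤ A*A` in the Loewner order, then there is a
contraction `C` from the closure of the range of `A` to the closure of the range of `B`
with `C ∘ A = B`. -/
theorem stmt_1 {H : Type*} [NormedAddCommGroup H] [InnerProductSpace ℂ H] [CompleteSpace H]
    (A B : H →L[ℂ] H)
    (hle : ((ContinuousLinearMap.adjoint A) ∘L A - (ContinuousLinearMap.adjoint B) ∘L B).IsPositive) :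
    ∃ C : (LinearMap.range (A : H →ₗ[ℂ] H)).topologicalClosure →L[ℂ] (LinearMap.range (B : H →ₗ[ℂ] H)).topologicalClosure,
      ‖C‖ ≤ 1 ∧ ∀ x : H,
        (C ⟨A x, Submodule.le_topologicalClosure _ ⟨x, rfl⟩⟩ : H) = B x := by
  let A' := (A : H →ₗ[ℂ] H).codRestrict (LinearMap.range (A : H →ₗ[ℂ] H)).topologicalClosure
    fun x ↦ Submodule.le_topologicalClosure _ ⟨x, rfl⟩
  let B' := (B : H →ₗ[ℂ] H).codRestrict (LinearMap.range (B : H →ₗ[ℂ] H)).topologicalClosure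
    fun x ↦ Submodule.le_topologicalClosure _ ⟨x, rfl⟩
  have hdense : DenseRange A' := LinearMap.denseRange_codRestrict_topologicalClosure _
  have hbound (x : H) : ‖B' x‖ ≤ 1 * ‖A' x‖ := by
    rw [one_mul]
    exact norm_apply_le_of_isPositive_adjoint_comp_sub hle x
  exact ⟨B'.extendOfNorm A', LinearMap.opNorm_extendOfNorm_le hdense zero_le_one hbound,
    fun x ↦ congrArg Subtype.val (LinearMap.extendOfNorm_eq hdense ⟨1, hbound⟩ x)⟩
end

section
/- Let H and K be complex Hilbert spaces, a ∈ B(H) positive, b ∈ B(K) positive, and x ∈ B(K,H). Then the block operator [[a, x],[x*, b]] on H ⊕ K is positive if and only if |⟨x k, h⟩| ≤ √(⟨a h, h⟩ · ⟨b k, k⟩) for all h ∈ H and k ∈ K. -/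
/-!
The quadratic form of the block operator at `(h, k)` is
`re ⟪a h, h⟫ + 2 re ⟪x k, h⟫ + re ⟪b k, k⟫`. Replacing `k` by complex multiples `conj t • k`
turns positivity at a fixed `(h, k)` into the scalar statement that
`A + 2 re (t m) + ‖t‖² B ≥ 0` for all `t : ℂ`, which holds iff `‖m‖ ≤ √(A B)`:
one direction is the discriminant of the real quadratic along `t = -s m̄`, the other is AM-GM.
-/

open ContinuousLinearMap

/-- The block operator `[[a, x], [x*, b]]` on the Hilbert space direct sum `H ⊕ K`,
acting by `(h, k) ↦ (a h + x k, x* h + b k)`. -/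
noncomputable def blockOp {H K : Type*} [NormedAddCommGroup H] [InnerProductSpace ℂ H]
    [NormedAddCommGroup K] [InnerProductSpace ℂ K] [CompleteSpace H] [CompleteSpace K]
    (a : H →L[ℂ] H) (b : K →L[ℂ] K) (x : K →L[ℂ] H) :
    WithLp 2 (H × K) →L[ℂ] WithLp 2 (H × K) :=
  (((WithLp.prodContinuousLinearEquiv 2 ℂ H K).symm : (H × K) →L[ℂ] WithLp 2 (H × K)) ∘L
    (((a ∘L fst ℂ H K) + (x ∘L snd ℂ H K)).prod
      (((adjoint x) ∘L fst ℂ H K) + (b ∘L snd ℂ H K)))) ∘L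
    ((WithLp.prodContinuousLinearEquiv 2 ℂ H K) : WithLp 2 (H × K) →L[ℂ] (H × K))

open ComplexConjugate

lemma Complex.norm_le_sqrt_mul_iff_forall_nonneg {A B : ℝ} (hA : 0 ≤ A) (hB : 0 ≤ B) (m : ℂ) :
    ‖m‖ ≤ √(A * B) ↔ ∀ t : ℂ, 0 ≤ A + 2 * (t * m).re + ‖t‖ ^ 2 * B := by
  constructor
  · intro hm t
    have hre : -(‖t‖ * ‖m‖) ≤ (t * m).re := by
      rw [← norm_mul]; exact neg_le_of_abs_le (Complex.abs_re_le_norm _)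
    rw [Real.sqrt_mul hA] at hm
    nlinarith [sq_nonneg (√A - ‖t‖ * √B), Real.sq_sqrt hA, Real.sq_sqrt hB, norm_nonneg t,
      mul_le_mul_of_nonneg_left hm (norm_nonneg t)]
  · intro hQ
    have hquad : ∀ s : ℝ, 0 ≤ (‖m‖ ^ 2 * B) * (s * s) + (-2 * ‖m‖ ^ 2) * s + A := by
      intro s
      have hs := hQ (-(s * conj m))
      rw [neg_mul, mul_assoc, Complex.conj_mul', norm_neg, norm_mul, Complex.norm_conj] at hs
      simp only [Complex.neg_re, Complex.norm_real, Real.norm_eq_abs, mul_pow, sq_abs] at hs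
      norm_cast at hs
      nlinarith
    have hdisc := discrim_le_zero hquad
    rw [discrim] at hdisc
    apply Real.le_sqrt_of_sq_le
    rcases (norm_nonneg m).eq_or_lt with hm0 | hm0
    · rw [← hm0, sq, zero_mul]; exact mul_nonneg hA hB
    · nlinarith [pow_pos hm0 2]

section BlockOp

variable {H K : Type*} [NormedAddCommGroup H] [InnerProductSpace ℂ H]
    [NormedAddCommGroup K] [InnerProductSpace ℂ K] [CompleteSpace H] [CompleteSpace K]

lemma inner_blockOp_apply (a : H →L[ℂ] H) (b : K →L[ℂ] K) (x : K →L[ℂ] H)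
    (z w : WithLp 2 (H × K)) :
    inner ℂ (blockOp a b x z) w =
      inner ℂ (a z.fst) w.fst + inner ℂ (x z.snd) w.fst + inner ℂ z.fst (x w.snd)
        + inner ℂ (b z.snd) w.snd := by
  simp only [blockOp, WithLp.prod_inner_apply, comp_apply, ContinuousLinearEquiv.coe_coe,
    WithLp.prodContinuousLinearEquiv_apply, WithLp.prodContinuousLinearEquiv_symm_apply,
    prod_apply, add_apply, coe_fst', coe_snd', WithLp.ofLp_fst, WithLp.ofLp_snd,
    inner_add_left, adjoint_inner_left]
  ring

lemma isSymmetric_blockOp {a : H →L[ℂ] H} {b : K →L[ℂ] K} (ha : a.IsSymmetric)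
    (hb : b.IsSymmetric) (x : K →L[ℂ] H) : (blockOp a b x).IsSymmetric := by
  intro z w
  simp only [coe_coe]
  rw [inner_blockOp_apply, ← inner_conj_symm z, inner_blockOp_apply]
  simp only [map_add, inner_conj_symm, ← coe_coe, ha z.fst w.fst, hb z.snd w.snd]
  ring

lemma re_inner_blockOp_self (a : H →L[ℂ] H) (b : K →L[ℂ] K) (x : K →L[ℂ] H)
    (z : WithLp 2 (H × K)) :
    (inner ℂ (blockOp a b x z) z).re =
      (inner ℂ (a z.fst) z.fst).re + 2 * (inner ℂ (x z.snd) z.fst).re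
        + (inner ℂ (b z.snd) z.snd).re := by
  rw [inner_blockOp_apply, ← inner_conj_symm z.fst]
  simp only [Complex.add_re, Complex.conj_re]
  ring

lemma isPositive_blockOp_iff {a : H →L[ℂ] H} {b : K →L[ℂ] K} (ha : a.IsSymmetric)
    (hb : b.IsSymmetric) (x : K →L[ℂ] H) :
    (blockOp a b x).IsPositive ↔ ∀ (h : H) (k : K),
      0 ≤ (inner ℂ (a h) h).re + 2 * (inner ℂ (x k) h).re + (inner ℂ (b k) k).re := by
  simp only [isPositive_def, isSymmetric_blockOp ha hb x, true_and, reApplyInnerSelf_apply,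
    RCLike.re_to_complex, re_inner_blockOp_self]
  exact ⟨fun hpos h k => hpos (WithLp.toLp 2 (h, k)), fun hpos z => hpos z.fst z.snd⟩

end BlockOp

theorem stmt_2 {H K : Type*} [NormedAddCommGroup H] [InnerProductSpace ℂ H]
    [NormedAddCommGroup K] [InnerProductSpace ℂ K] [CompleteSpace H] [CompleteSpace K]
    (a : H →L[ℂ] H) (b : K →L[ℂ] K) (x : K →L[ℂ] H)
    (ha : a.IsPositive) (hb : b.IsPositive) :
    (blockOp a b x).IsPositive ↔
      ∀ (h : H) (k : K), ‖(inner ℂ (x k) h : ℂ)‖ ≤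
        Real.sqrt ((inner ℂ (a h) h : ℂ).re * (inner ℂ (b k) k : ℂ).re) := by
  rw [isPositive_blockOp_iff ha.isSymmetric hb.isSymmetric]
  refine forall_congr' fun h => ⟨fun hQ k => ?_, fun hbound k => ?_⟩
  · refine (Complex.norm_le_sqrt_mul_iff_forall_nonneg (ha.re_inner_nonneg_left h)
      (hb.re_inner_nonneg_left k) _).mpr fun t => ?_
    have hb_smul :
        (inner ℂ (b (conj t • k)) (conj t • k)).re = ‖t‖ ^ 2 * (inner ℂ (b k) k).re := by
      simpa only [reApplyInnerSelf_apply, RCLike.re_to_complex, Complex.norm_conj]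
        using b.reApplyInnerSelf_smul k (c := conj t)
    have hx_smul : inner ℂ (x (conj t • k)) h = t * inner ℂ (x k) h := by
      rw [map_smul, inner_smul_left, Complex.conj_conj]
    simpa only [hx_smul, hb_smul, RCLike.re_to_complex] using hQ (conj t • k)
  · simpa using ((Complex.norm_le_sqrt_mul_iff_forall_nonneg (ha.re_inner_nonneg_left h)
      (hb.re_inner_nonneg_left k) _).mp (hbound k) 1)
end

section
/- Let ψ = ∑_{j=1}^d λ_j (x_j ⊗ y_j) be a unit vector in ℂ^d ⊗ ℂ^d in Schmidt form with λ_j ≥ 0, and let ψ' be any maximally entangled unit vector, i.e. ψ' = (1/√d) ∑_{j=1}^d ξ_j ⊗ η_j for orthonormal bases (ξ_j), (η_j). Then |⟨ψ, ψ'⟩| ≤ (1/√d) ∑_{j=1}^d λ_j, and this bound is attained by some maximally entangled ψ'. -/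
/-!
Expanding both vectors in elementary tensors gives
`⟨ψ, ψ'⟩ = d^{-1/2} ∑_{j,k} λ_j ⟨x_j, ξ_k⟩ ⟨y_j, η_k⟩`. For each `j`, Cauchy–Schwarz followed by
Bessel's inequality bounds `∑_k |⟨x_j, ξ_k⟩| |⟨y_j, η_k⟩|` by `‖x_j‖ ‖y_j‖ = 1`. Taking `ξ = x` and
`η = y` collapses the double sum to `∑ λ_j`.
-/

open Finset ComplexConjugate

section Kronecker

variable {𝕜 : Type*} [RCLike 𝕜] {ι κ σ τ : Type*}

/-- The elementary tensor `a ⊗ b` in the coordinates of `𝕜^ι ⊗ 𝕜^κ ≅ 𝕜^(ι × κ)`. -/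
def kronVec (a : EuclideanSpace 𝕜 ι) (b : EuclideanSpace 𝕜 κ) : EuclideanSpace 𝕜 (ι × κ) :=
  WithLp.toLp 2 fun p => a p.1 * b p.2

@[simp]
lemma kronVec_apply (a : EuclideanSpace 𝕜 ι) (b : EuclideanSpace 𝕜 κ) (p : ι × κ) :
    kronVec a b p = a p.1 * b p.2 := rfl

lemma inner_kronVec [Fintype ι] [Fintype κ] (a a' : EuclideanSpace 𝕜 ι)
    (b b' : EuclideanSpace 𝕜 κ) :
    inner 𝕜 (kronVec a b) (kronVec a' b') = inner 𝕜 a a' * inner 𝕜 b b' := by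
  simp only [PiLp.inner_apply, RCLike.inner_apply', kronVec_apply, Fintype.sum_prod_type,
    sum_mul_sum, map_mul]
  exact sum_congr rfl fun _ _ => sum_congr rfl fun _ _ => by ring

lemma eq_sum_smul_kronVec [Fintype σ] {ψ : EuclideanSpace 𝕜 (ι × κ)} {c : σ → 𝕜}
    {a : σ → EuclideanSpace 𝕜 ι} {b : σ → EuclideanSpace 𝕜 κ}
    (hψ : ∀ p : ι × κ, ψ p = ∑ j, c j * a j p.1 * b j p.2) :
    ψ = ∑ j, c j • kronVec (a j) (b j) := by
  ext p
  simp [hψ, mul_assoc]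

lemma inner_sum_smul_kronVec [Fintype ι] [Fintype κ] [Fintype σ] [Fintype τ]
    (c : σ → 𝕜) (c' : τ → 𝕜)
    (a : σ → EuclideanSpace 𝕜 ι) (b : σ → EuclideanSpace 𝕜 κ)
    (a' : τ → EuclideanSpace 𝕜 ι) (b' : τ → EuclideanSpace 𝕜 κ) :
    inner 𝕜 (∑ j, c j • kronVec (a j) (b j)) (∑ k, c' k • kronVec (a' k) (b' k)) =
      ∑ j, ∑ k, conj (c j) * c' k * (inner 𝕜 (a j) (a' k) * inner 𝕜 (b j) (b' k)) := by
  simp_rw [sum_inner, inner_smul_left, inner_sum, inner_smul_right, inner_kronVec, mul_sum,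
    mul_assoc]

end Kronecker

lemma Orthonormal.sum_norm_inner_mul_norm_inner_le {𝕜 E F ι : Type*} [RCLike 𝕜]
    [NormedAddCommGroup E] [InnerProductSpace 𝕜 E] [NormedAddCommGroup F] [InnerProductSpace 𝕜 F]
    [Fintype ι] {ξ : ι → E} {η : ι → F}
    (hξ : Orthonormal 𝕜 ξ) (hη : Orthonormal 𝕜 η) (u : E) (v : F) :
    ∑ k, ‖inner 𝕜 u (ξ k)‖ * ‖inner 𝕜 v (η k)‖ ≤ ‖u‖ * ‖v‖ := by
  simp only [norm_inner_symm u, norm_inner_symm v]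
  calc ∑ k, ‖inner 𝕜 (ξ k) u‖ * ‖inner 𝕜 (η k) v‖
      ≤ √(∑ k, ‖inner 𝕜 (ξ k) u‖ ^ 2) * √(∑ k, ‖inner 𝕜 (η k) v‖ ^ 2) :=
        Real.sum_mul_le_sqrt_mul_sqrt _ _ _
    _ ≤ √(‖u‖ ^ 2) * √(‖v‖ ^ 2) := by
        gcongr
        exacts [hξ.sum_inner_products_le u, hη.sum_inner_products_le v]
    _ = ‖u‖ * ‖v‖ := by simp

section Schmidt

variable {𝕜 ι κ σ : Type*} [RCLike 𝕜] [Fintype ι] [Fintype κ] [Fintype σ]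
  {lam : σ → ℝ} {x ξ : σ → EuclideanSpace 𝕜 ι} {y η : σ → EuclideanSpace 𝕜 κ}

lemma inner_schmidt_eq {ψ ψ' : EuclideanSpace 𝕜 (ι × κ)} {c : 𝕜}
    (hψ : ∀ p : ι × κ, ψ p = ∑ j, (lam j : 𝕜) * x j p.1 * y j p.2)
    (hψ' : ∀ p : ι × κ, ψ' p = c * ∑ k, ξ k p.1 * η k p.2) :
    inner 𝕜 ψ ψ' =
      c * ∑ j, ∑ k, (lam j : 𝕜) * (inner 𝕜 (x j) (ξ k) * inner 𝕜 (y j) (η k)) := by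
  have hψ'' : ∀ p : ι × κ, ψ' p = ∑ k, c * ξ k p.1 * η k p.2 := fun p => by
    simp only [hψ' p, mul_sum, mul_assoc]
  rw [eq_sum_smul_kronVec hψ, eq_sum_smul_kronVec hψ'', inner_sum_smul_kronVec]
  simp only [RCLike.conj_ofReal, mul_sum]
  exact sum_congr rfl fun _ _ => sum_congr rfl fun _ _ => by ring

lemma norm_schmidt_sum_le (hlam : ∀ j, 0 ≤ lam j) (hx : ∀ j, ‖x j‖ = 1) (hy : ∀ j, ‖y j‖ = 1)
    (hξ : Orthonormal 𝕜 ξ) (hη : Orthonormal 𝕜 η) :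
    ‖∑ j, ∑ k, (lam j : 𝕜) * (inner 𝕜 (x j) (ξ k) * inner 𝕜 (y j) (η k))‖ ≤ ∑ j, lam j := by
  calc ‖∑ j, ∑ k, (lam j : 𝕜) * (inner 𝕜 (x j) (ξ k) * inner 𝕜 (y j) (η k))‖
      ≤ ∑ j, ∑ k, ‖(lam j : 𝕜) * (inner 𝕜 (x j) (ξ k) * inner 𝕜 (y j) (η k))‖ :=
        (norm_sum_le _ _).trans (sum_le_sum fun _ _ => norm_sum_le _ _)
    _ = ∑ j, lam j * ∑ k, ‖inner 𝕜 (x j) (ξ k)‖ * ‖inner 𝕜 (y j) (η k)‖ := by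
        simp only [norm_mul, RCLike.norm_ofReal, abs_of_nonneg (hlam _), mul_sum]
    _ ≤ ∑ j, lam j * (‖x j‖ * ‖y j‖) := by
        gcongr with j
        · exact hlam j
        · exact hξ.sum_norm_inner_mul_norm_inner_le hη _ _
    _ = ∑ j, lam j := by simp [hx, hy]

lemma schmidt_sum_self (hx : Orthonormal 𝕜 x) (hy : Orthonormal 𝕜 y) :
    ∑ j, ∑ k, (lam j : 𝕜) * (inner 𝕜 (x j) (x k) * inner 𝕜 (y j) (y k)) = ∑ j, (lam j : 𝕜) := by
  classical
  simp [orthonormal_iff_ite.mp hx, orthonormal_iff_ite.mp hy]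

end Schmidt

theorem stmt_11_general (d : ℕ) (lam : Fin d → ℝ)
    (x y : Fin d → EuclideanSpace ℂ (Fin d))
    (hlam : ∀ j, 0 ≤ lam j)
    (hx : Orthonormal ℂ x) (hy : Orthonormal ℂ y)
    (ψ : EuclideanSpace ℂ (Fin d × Fin d))
    (hψ : ∀ p : Fin d × Fin d, ψ p = ∑ j, (lam j : ℂ) * x j p.1 * y j p.2) :
    (∀ (ξ η : Fin d → EuclideanSpace ℂ (Fin d))
        (ψ' : EuclideanSpace ℂ (Fin d × Fin d)),
        Orthonormal ℂ ξ → Orthonormal ℂ η →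
        (∀ p : Fin d × Fin d, ψ' p = ((Real.sqrt d)⁻¹ : ℂ) * ∑ j, ξ j p.1 * η j p.2) →
        ‖(inner ℂ ψ ψ' : ℂ)‖ ≤ (Real.sqrt d)⁻¹ * ∑ j, lam j) ∧
    (∃ (ξ η : Fin d → EuclideanSpace ℂ (Fin d))
        (ψ' : EuclideanSpace ℂ (Fin d × Fin d)),
        Orthonormal ℂ ξ ∧ Orthonormal ℂ η ∧
        (∀ p : Fin d × Fin d, ψ' p = ((Real.sqrt d)⁻¹ : ℂ) * ∑ j, ξ j p.1 * η j p.2) ∧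
        ‖(inner ℂ ψ ψ' : ℂ)‖ = (Real.sqrt d)⁻¹ * ∑ j, lam j) := by
  constructor
  · intro ξ η ψ' hξ hη hψ'
    rw [inner_schmidt_eq hψ hψ', norm_mul, norm_inv, Complex.norm_real,
      Real.norm_of_nonneg (Real.sqrt_nonneg _)]
    gcongr
    exact norm_schmidt_sum_le hlam hx.1 hy.1 hξ hη
  · refine ⟨x, y, WithLp.toLp 2 fun p => ((Real.sqrt d)⁻¹ : ℂ) * ∑ j, x j p.1 * y j p.2,
      hx, hy, fun _ => rfl, ?_⟩
    rw [inner_schmidt_eq hψ fun _ => rfl, schmidt_sum_self hx hy, norm_mul]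
    norm_cast
    simp [abs_of_nonneg (sum_nonneg fun j _ => hlam j)]

/-- For a unit vector `ψ = ∑ λ_j (x_j ⊗ y_j)` of `ℂ^d ⊗ ℂ^d` in Schmidt form,
`|⟨ψ, ψ'⟩| ≤ (1/√d) ∑ λ_j` for every maximally entangled unit vector
`ψ' = (1/√d) ∑ ξ_j ⊗ η_j`, and the bound is attained by some maximally entangled `ψ'`. -/
theorem stmt_11 (d : ℕ) (hd : 0 < d) (lam : Fin d → ℝ)
    (x y : Fin d → EuclideanSpace ℂ (Fin d))
    (hlam : ∀ j, 0 ≤ lam j) (hsum : ∑ j, lam j ^ 2 = 1)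
    (hx : Orthonormal ℂ x) (hy : Orthonormal ℂ y)
    (ψ : EuclideanSpace ℂ (Fin d × Fin d))
    (hψ : ∀ p : Fin d × Fin d, ψ p = ∑ j, (lam j : ℂ) * x j p.1 * y j p.2) :
    (∀ (ξ η : Fin d → EuclideanSpace ℂ (Fin d))
        (ψ' : EuclideanSpace ℂ (Fin d × Fin d)),
        Orthonormal ℂ ξ → Orthonormal ℂ η →
        (∀ p : Fin d × Fin d, ψ' p = ((Real.sqrt d)⁻¹ : ℂ) * ∑ j, ξ j p.1 * η j p.2) →
        ‖(inner ℂ ψ ψ' : ℂ)‖ ≤ (Real.sqrt d)⁻¹ * ∑ j, lam j) ∧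
    (∃ (ξ η : Fin d → EuclideanSpace ℂ (Fin d))
        (ψ' : EuclideanSpace ℂ (Fin d × Fin d)),
        Orthonormal ℂ ξ ∧ Orthonormal ℂ η ∧
        (∀ p : Fin d × Fin d, ψ' p = ((Real.sqrt d)⁻¹ : ℂ) * ∑ j, ξ j p.1 * η j p.2) ∧
        ‖(inner ℂ ψ ψ' : ℂ)‖ = (Real.sqrt d)⁻¹ * ∑ j, lam j) :=
  stmt_11_general d lam x y hlam hx hy ψ hψ
end

section
/- Let ψ ∈ ℂ^d ⊗ ℂ^d be a unit vector of Schmidt rank at most k (at most k nonzero Schmidt coefficients). Then for every maximally entangled unit vector ψ' ∈ ℂ^d ⊗ ℂ^d, |⟨ψ, ψ'⟩|² ≤ k/d. -/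
/-!
Expanding both vectors coordinatewise gives
`⟪ψ, ψ'⟫ = d^{-1/2} ∑_j λ_j ∑_i ⟪x_j, ξ_i⟫ ⟪y_j, η_i⟫`.
By Cauchy–Schwarz and Bessel's inequality each inner sum has modulus at most `‖x_j‖ ‖y_j‖ = 1`,
so `|⟪ψ, ψ'⟫| ≤ d^{-1/2} ∑_j |λ_j| ≤ d^{-1/2} (k ∑_j λ_j²)^{1/2} = (k / d)^{1/2}`.
-/

open Finset ComplexConjugate

section

variable {𝕜 ι E F : Type*} [RCLike 𝕜] [NormedAddCommGroup E] [InnerProductSpace 𝕜 E]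
    [NormedAddCommGroup F] [InnerProductSpace 𝕜 F]

theorem Orthonormal.sqrt_sum_norm_inner_sq_le {v : ι → E} (hv : Orthonormal 𝕜 v) (x : E)
    (s : Finset ι) : √(∑ i ∈ s, ‖inner 𝕜 x (v i)‖ ^ 2) ≤ ‖x‖ := by
  refine Real.sqrt_le_iff.mpr ⟨norm_nonneg x, ?_⟩
  simpa only [norm_inner_symm] using hv.sum_inner_products_le x

theorem norm_sum_inner_mul_inner_le {ξ : ι → E} {η : ι → F}
    (hξ : Orthonormal 𝕜 ξ) (hη : Orthonormal 𝕜 η) (x : E) (y : F) (s : Finset ι) :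
    ‖∑ i ∈ s, inner 𝕜 x (ξ i) * inner 𝕜 y (η i)‖ ≤ ‖x‖ * ‖y‖ :=
  calc ‖∑ i ∈ s, inner 𝕜 x (ξ i) * inner 𝕜 y (η i)‖
      ≤ ∑ i ∈ s, ‖inner 𝕜 x (ξ i)‖ * ‖inner 𝕜 y (η i)‖ :=
        norm_sum_le_of_le s fun _ _ => norm_mul_le _ _
    _ ≤ √(∑ i ∈ s, ‖inner 𝕜 x (ξ i)‖ ^ 2) * √(∑ i ∈ s, ‖inner 𝕜 y (η i)‖ ^ 2) :=
      Real.sum_mul_le_sqrt_mul_sqrt s _ _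
    _ ≤ ‖x‖ * ‖y‖ := mul_le_mul (hξ.sqrt_sum_norm_inner_sq_le x s)
      (hη.sqrt_sum_norm_inner_sq_le y s) (Real.sqrt_nonneg _) (norm_nonneg x)

end

section

variable {𝕜 ι κ m n : Type*} [RCLike 𝕜] [Fintype ι] [Fintype κ] [Fintype m] [Fintype n]

theorem EuclideanSpace.inner_mul_inner_eq_sum_prod (u u' : EuclideanSpace 𝕜 m)
    (v v' : EuclideanSpace 𝕜 n) :
    inner 𝕜 u u' * inner 𝕜 v v' = ∑ p : m × n, conj (u p.1 * v p.2 : 𝕜) * (u' p.1 * v' p.2) := by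
  simp only [PiLp.inner_apply, RCLike.inner_apply, Fintype.sum_prod_type, sum_mul_sum, map_mul]
  exact sum_congr rfl fun _ _ => sum_congr rfl fun _ _ => by ring

theorem inner_eq_of_eq_sum_tensor (a : ι → 𝕜) (x : ι → EuclideanSpace 𝕜 m)
    (y : ι → EuclideanSpace 𝕜 n) (c : 𝕜) (ξ : κ → EuclideanSpace 𝕜 m)
    (η : κ → EuclideanSpace 𝕜 n) {ψ φ : EuclideanSpace 𝕜 (m × n)}
    (hψ : ∀ p, ψ p = ∑ j, a j * x j p.1 * y j p.2)
    (hφ : ∀ p, φ p = c * ∑ i, ξ i p.1 * η i p.2) :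
    inner 𝕜 ψ φ = c * ∑ j, conj (a j) * ∑ i, inner 𝕜 (x j) (ξ i) * inner 𝕜 (y j) (η i) := by
  calc inner 𝕜 ψ φ = ∑ p : m × n, conj (ψ p : 𝕜) * φ p := by simp [PiLp.inner_apply, mul_comm]
    _ = ∑ p : m × n, ∑ j, ∑ i,
          c * (conj (a j) * (conj (x j p.1 * y j p.2 : 𝕜) * (ξ i p.1 * η i p.2))) := by
      refine sum_congr rfl fun p _ => ?_
      simp only [hψ, hφ, map_sum, map_mul, mul_sum, sum_mul]
      rw [sum_comm]
      exact sum_congr rfl fun _ _ => sum_congr rfl fun _ _ => by ring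
    _ = _ := by
      simp only [EuclideanSpace.inner_mul_inner_eq_sum_prod, mul_sum]
      rw [sum_comm]
      exact sum_congr rfl fun _ _ => sum_comm

theorem norm_inner_le_of_eq_sum_tensor (a : ι → 𝕜) {x : ι → EuclideanSpace 𝕜 m}
    {y : ι → EuclideanSpace 𝕜 n} (c : 𝕜) {ξ : κ → EuclideanSpace 𝕜 m}
    {η : κ → EuclideanSpace 𝕜 n} (hx : ∀ j, ‖x j‖ = 1) (hy : ∀ j, ‖y j‖ = 1)
    (hξ : Orthonormal 𝕜 ξ) (hη : Orthonormal 𝕜 η) {ψ φ : EuclideanSpace 𝕜 (m × n)}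
    (hψ : ∀ p, ψ p = ∑ j, a j * x j p.1 * y j p.2)
    (hφ : ∀ p, φ p = c * ∑ i, ξ i p.1 * η i p.2) :
    ‖inner 𝕜 ψ φ‖ ≤ ‖c‖ * ∑ j, ‖a j‖ := by
  rw [inner_eq_of_eq_sum_tensor a x y c ξ η hψ hφ, norm_mul]
  gcongr
  refine (norm_sum_le _ _).trans (sum_le_sum fun j _ => ?_)
  rw [norm_mul, RCLike.norm_conj]
  calc ‖a j‖ * ‖∑ i, inner 𝕜 (x j) (ξ i) * inner 𝕜 (y j) (η i)‖
      ≤ ‖a j‖ * (‖x j‖ * ‖y j‖) := by gcongr; exact norm_sum_inner_mul_inner_le hξ hη _ _ _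
    _ = ‖a j‖ := by rw [hx, hy, mul_one, mul_one]

end

theorem stmt_12_general (d k : ℕ) (lam : Fin k → ℝ)
    (x y : Fin k → EuclideanSpace ℂ (Fin d))
    (hsum : ∑ j, lam j ^ 2 = 1)
    (hx : Orthonormal ℂ x) (hy : Orthonormal ℂ y)
    (ψ : EuclideanSpace ℂ (Fin d × Fin d))
    (hψ : ∀ p : Fin d × Fin d, ψ p = ∑ j, (lam j : ℂ) * x j p.1 * y j p.2)
    (ξ η : Fin d → EuclideanSpace ℂ (Fin d))
    (hξ : Orthonormal ℂ ξ) (hη : Orthonormal ℂ η)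
    (ψ' : EuclideanSpace ℂ (Fin d × Fin d))
    (hψ' : ∀ p : Fin d × Fin d, ψ' p = ((Real.sqrt d)⁻¹ : ℂ) * ∑ j, ξ j p.1 * η j p.2) :
    ‖(inner ℂ ψ ψ' : ℂ)‖ ^ 2 ≤ (k : ℝ) / d := by
  have hbound := norm_inner_le_of_eq_sum_tensor _ _ hx.1 hy.1 hξ hη hψ hψ'
  simp only [norm_inv, Complex.norm_real, Real.norm_eq_abs, abs_of_nonneg (Real.sqrt_nonneg _)]
    at hbound
  calc ‖(inner ℂ ψ ψ' : ℂ)‖ ^ 2 ≤ ((√d)⁻¹ * ∑ j, |lam j|) ^ 2 := by gcongr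
    _ = (∑ j, |lam j|) ^ 2 / d := by
      rw [mul_pow, inv_pow, Real.sq_sqrt d.cast_nonneg, inv_mul_eq_div]
    _ ≤ (k * ∑ j, lam j ^ 2) / d := by
      gcongr
      simpa using sq_sum_le_card_mul_sum_sq (s := univ) (f := fun j => |lam j|)
    _ = k / d := by rw [hsum, mul_one]

/-- If `ψ ∈ ℂ^d ⊗ ℂ^d` is a unit vector of Schmidt rank at most `k`, then for every maximally
entangled unit vector `ψ'`, `|⟨ψ, ψ'⟩|² ≤ k / d`. -/
theorem stmt_12 (d k : ℕ) (hd : 0 < d) (lam : Fin k → ℝ)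
    (x y : Fin k → EuclideanSpace ℂ (Fin d))
    (hlam : ∀ j, 0 ≤ lam j) (hsum : ∑ j, lam j ^ 2 = 1)
    (hx : Orthonormal ℂ x) (hy : Orthonormal ℂ y)
    (ψ : EuclideanSpace ℂ (Fin d × Fin d))
    (hψ : ∀ p : Fin d × Fin d, ψ p = ∑ j, (lam j : ℂ) * x j p.1 * y j p.2)
    (ξ η : Fin d → EuclideanSpace ℂ (Fin d))
    (hξ : Orthonormal ℂ ξ) (hη : Orthonormal ℂ η)
    (ψ' : EuclideanSpace ℂ (Fin d × Fin d))
    (hψ' : ∀ p : Fin d × Fin d, ψ' p = ((Real.sqrt d)⁻¹ : ℂ) * ∑ j, ξ j p.1 * η j p.2) :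
    ‖(inner ℂ ψ ψ' : ℂ)‖ ^ 2 ≤ (k : ℝ) / d :=
  stmt_12_general d k lam x y hsum hx hy ψ hψ ξ η hξ hη ψ' hψ'
end

section
/- Let ρ_{AB} be a density matrix on ℂ^m ⊗ ℂ^n with marginals ρ_A = Tr_B(ρ_{AB}) and ρ_B = Tr_A(ρ_{AB}). Then the von Neumann entropy satisfies subadditivity: S(ρ_{AB}) ≤ S(ρ_A) + S(ρ_B), where S(ρ) = −Tr(ρ log ρ). -/
open Matrix
open scoped ComplexOrder

/-- The von Neumann entropy `S(ρ) = −Tr(ρ log ρ)`, computed via the eigenvalues of a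
Hermitian matrix with the convention `0 log 0 = 0` (as in `Real.log 0 = 0`);
junk value `0` for non-Hermitian matrices. -/
noncomputable def vnEntropy {ι : Type*} [Fintype ι] [DecidableEq ι]
    (ρ : Matrix ι ι ℂ) : ℝ :=
  if h : ρ.IsHermitian then -∑ i, h.eigenvalues i * Real.log (h.eigenvalues i) else 0

/-
Diagonalize the marginals, `ρ_A = U diag(α) U*` and `ρ_B = V diag(β) V*`, and let `q` be the
diagonal of `ρ` in the product basis given by `U ⊗ V`. The partial traces of `(U ⊗ V)* ρ (U ⊗ V)`
are `diag(α)` and `diag(β)`, so `α` and `β` are the marginals of the probability vector `q`.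
Writing `ρ = W diag(λ) W*`, we get `q = c λ` with `c` the doubly stochastic matrix of squared
moduli of the entries of the unitary `(U ⊗ V)* W`; Jensen's inequality for the concave function
`x ↦ -x log x` gives `S(ρ) = H(λ) ≤ H(q)`, and classical subadditivity `H(q) ≤ H(α) + H(β)`
follows from `log x ≤ x - 1` (Gibbs' inequality).
-/

open Finset
open scoped Kronecker

namespace Real

theorem sum_negMulLog_le_sum_negMulLog_mulVec {ι : Type*} [Fintype ι] [DecidableEq ι]
    {M : Matrix ι ι ℝ} (hM : M ∈ doublyStochastic ℝ ι) {x : ι → ℝ} (hx : ∀ i, 0 ≤ x i) :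
    ∑ i, negMulLog (x i) ≤ ∑ j, negMulLog ((M *ᵥ x) j) := by
  have jensen (j : ι) : ∑ i, M j i * negMulLog (x i) ≤ negMulLog ((M *ᵥ x) j) :=
    concaveOn_negMulLog.le_map_sum (fun i _ => hM.1 j i) (sum_row_of_mem_doublyStochastic hM j)
      fun i _ => Set.mem_Ici.2 (hx i)
  calc ∑ i, negMulLog (x i) = ∑ j, ∑ i, M j i * negMulLog (x i) := by
        simp only [sum_comm (γ := ι), ← sum_mul, sum_col_of_mem_doublyStochastic hM, one_mul]
    _ ≤ ∑ j, negMulLog ((M *ᵥ x) j) := sum_le_sum fun j _ => jensen j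

theorem negMulLog_le_mul_sub_sub_mul_log_add_log {p a b : ℝ} (hp : 0 ≤ p) (ha : p ≤ a)
    (hb : p ≤ b) : negMulLog p ≤ a * b - p - p * (log a + log b) := by
  rcases hp.eq_or_lt with rfl | hp
  · simpa using mul_nonneg ha hb
  have ha₀ : 0 < a := hp.trans_le ha
  have hb₀ : 0 < b := hp.trans_le hb
  have gibbs : p * log (a * b / p) ≤ p * (a * b / p - 1) :=
    mul_le_mul_of_nonneg_left (log_le_sub_one_of_pos (by positivity)) hp.le
  rw [log_div (by positivity) hp.ne', log_mul ha₀.ne' hb₀.ne', mul_sub_one,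
    mul_div_cancel₀ _ hp.ne'] at gibbs
  rw [negMulLog]
  linarith

theorem sum_negMulLog_le_sum_negMulLog_marginals {ι κ : Type*} [Fintype ι] [Fintype κ]
    {q : ι × κ → ℝ} (hq : ∀ p, 0 ≤ q p) (hq1 : ∑ p, q p = 1) :
    ∑ p, negMulLog (q p) ≤
      ∑ i, negMulLog (∑ k, q (i, k)) + ∑ k, negMulLog (∑ i, q (i, k)) := by
  set α : ι → ℝ := fun i => ∑ k, q (i, k)
  set β : κ → ℝ := fun k => ∑ i, q (i, k)
  have hα1 : ∑ i, α i = 1 := by rw [← hq1, Fintype.sum_prod_type]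
  have hβ1 : ∑ k, β k = 1 := by rw [← hq1, Fintype.sum_prod_type_right]
  have pointwise (i : ι) (k : κ) :
      negMulLog (q (i, k)) ≤ α i * β k - q (i, k) - q (i, k) * (log (α i) + log (β k)) :=
    negMulLog_le_mul_sub_sub_mul_log_add_log (hq _)
      (single_le_sum (fun k _ => hq (i, k)) (mem_univ k))
      (single_le_sum (fun i _ => hq (i, k)) (mem_univ i))
  calc ∑ p, negMulLog (q p) = ∑ i, ∑ k, negMulLog (q (i, k)) := Fintype.sum_prod_type _
    _ ≤ ∑ i, ∑ k, (α i * β k - q (i, k) - q (i, k) * (log (α i) + log (β k))) :=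
        sum_le_sum fun i _ => sum_le_sum fun k _ => pointwise i k
    _ = (∑ i, α i) * (∑ k, β k) - ∑ i, α i -
          (∑ i, α i * log (α i) + ∑ k, β k * log (β k)) := by
        simp only [mul_add, sum_add_distrib, sum_sub_distrib, sum_mul_sum, ← sum_mul]
        rw [sum_comm (f := fun i k => q (i, k) * log (β k))]
        simp only [← sum_mul]
        rfl
    _ = ∑ i, negMulLog (α i) + ∑ k, negMulLog (β k) := by
        simp only [hα1, hβ1, negMulLog, sum_neg_distrib, neg_mul]
        ring

end Real

open Real

namespace Matrix

variable {ι κ R : Type*}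

theorem normSq_mem_doublyStochastic [Fintype ι] [DecidableEq ι] {U : Matrix ι ι ℂ}
    (hU : U ∈ unitaryGroup ι ℂ) :
    (of fun i j => Complex.normSq (U i j)) ∈ doublyStochastic ℝ ι := by
  refine mem_doublyStochastic_iff_sum.2
    ⟨fun i j => Complex.normSq_nonneg _, fun i => ?_, fun j => ?_⟩
  all_goals apply Complex.ofReal_injective
  · simpa [mul_apply, ← Complex.mul_conj] using congr_fun₂ (mem_unitaryGroup_iff.1 hU) i i
  · simpa [mul_apply, ← Complex.mul_conj, mul_comm] using
      congr_fun₂ (mem_unitaryGroup_iff'.1 hU) j j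

theorem mul_diagonal_mul_conjTranspose_apply_self [Fintype ι] [DecidableEq ι] (X : Matrix ι ι ℂ)
    (d : ι → ℝ) (j : ι) :
    (X * diagonal (fun i => (d i : ℂ)) * Xᴴ) j j = ∑ i, (Complex.normSq (X j i) * d i : ℝ) := by
  simp only [mul_apply, diagonal_apply, mul_ite, mul_zero, sum_ite_eq', mem_univ, if_true,
    conjTranspose_apply, Complex.ofReal_sum, Complex.ofReal_mul, ← Complex.mul_conj]
  exact sum_congr rfl fun i _ => by simp only [RCLike.star_def]; ring

theorem IsHermitian.re_star_mul_mul_apply_self [Fintype ι] [DecidableEq ι] {A : Matrix ι ι ℂ}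
    (hA : A.IsHermitian) (Y : Matrix ι ι ℂ) (j : ι) :
    ((star Y * A * Y) j j).re =
      ((of fun j i => Complex.normSq ((star Y * (hA.eigenvectorUnitary : Matrix ι ι ℂ)) j i)) *ᵥ
        hA.eigenvalues) j := by
  have hconj : star Y * A * Y = (star Y * (hA.eigenvectorUnitary : Matrix ι ι ℂ)) *
      diagonal (fun i => (hA.eigenvalues i : ℂ)) *
        (star Y * (hA.eigenvectorUnitary : Matrix ι ι ℂ))ᴴ := by
    conv_lhs => rw [hA.spectral_theorem]
    simp [Matrix.mul_assoc, Function.comp_def, ← star_eq_conjTranspose]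
  rw [hconj, mul_diagonal_mul_conjTranspose_apply_self, Complex.ofReal_re]
  rfl

theorem IsHermitian.star_eigenvectorUnitary_mul_mul_apply_self [Fintype ι] [DecidableEq ι]
    {A : Matrix ι ι ℂ} (hA : A.IsHermitian) (i : ι) :
    (star (hA.eigenvectorUnitary : Matrix ι ι ℂ) * A * hA.eigenvectorUnitary) i i =
      hA.eigenvalues i := by
  simpa using congr_fun₂ hA.conjStarAlgAut_star_eigenvectorUnitary i i

theorem PosSemidef.sum_negMulLog_eigenvalues_le_sum_negMulLog_diag [Fintype ι] [DecidableEq ι]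
    {A : Matrix ι ι ℂ} (hA : A.PosSemidef) {Y : Matrix ι ι ℂ} (hY : Y ∈ unitaryGroup ι ℂ) :
    ∑ i, negMulLog (hA.1.eigenvalues i) ≤ ∑ j, negMulLog ((star Y * A * Y) j j).re := by
  simp only [hA.1.re_star_mul_mul_apply_self]
  exact sum_negMulLog_le_sum_negMulLog_mulVec (normSq_mem_doublyStochastic
    (mul_mem (Unitary.star_mem hY) hA.1.eigenvectorUnitary.2)) hA.eigenvalues_nonneg

/-- The partial trace `Tr_B` over the second tensor factor. -/
def partialTraceSnd [Fintype κ] [AddCommMonoid R] (ρ : Matrix (ι × κ) (ι × κ) R) : Matrix ι ι R :=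
  of fun i j => ∑ k, ρ (i, k) (j, k)

/-- The partial trace `Tr_A` over the first tensor factor. -/
def partialTraceFst [Fintype ι] [AddCommMonoid R] (ρ : Matrix (ι × κ) (ι × κ) R) : Matrix κ κ R :=
  of fun k l => ∑ i, ρ (i, k) (i, l)

theorem IsHermitian.partialTraceSnd [Fintype κ] [AddCommMonoid R] [StarAddMonoid R]
    {ρ : Matrix (ι × κ) (ι × κ) R} (hρ : ρ.IsHermitian) :
    (partialTraceSnd ρ).IsHermitian := by
  ext i j
  simp [Matrix.partialTraceSnd, star_sum, hρ.apply]

theorem IsHermitian.partialTraceFst [Fintype ι] [AddCommMonoid R] [StarAddMonoid R]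
    {ρ : Matrix (ι × κ) (ι × κ) R} (hρ : ρ.IsHermitian) :
    (partialTraceFst ρ).IsHermitian := by
  ext k l
  simp [Matrix.partialTraceFst, star_sum, hρ.apply]

theorem partialTraceSnd_star_kronecker_mul_mul_kronecker [Fintype ι] [Fintype κ] [DecidableEq κ]
    [CommRing R] [StarRing R] (ρ : Matrix (ι × κ) (ι × κ) R) (U : Matrix ι ι R)
    {V : Matrix κ κ R} (hV : V ∈ unitaryGroup κ R) :
    partialTraceSnd (star (U ⊗ₖ V) * ρ * (U ⊗ₖ V)) = star U * partialTraceSnd ρ * U := by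
  ext i j
  have hV' (k l : κ) : ∑ s, V l s * star (V k s) = if l = k then 1 else 0 := by
    simpa [mul_apply, one_apply] using congr_fun₂ (mem_unitaryGroup_iff.1 hV) l k
  simp only [partialTraceSnd, of_apply, mul_apply, star_apply, kroneckerMap_apply,
    Fintype.sum_prod_type, sum_mul, mul_sum, star_mul']
  calc _ = ∑ x, ∑ x₁, ∑ x₂, ∑ x₃,
          star (U x₂ i) * ρ (x₂, x₃) (x, x₁) * U x j * ∑ k, V x₁ k * star (V x₃ k) := by
          rw [sum_comm]; refine sum_congr rfl fun x _ => ?_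
          rw [sum_comm]; refine sum_congr rfl fun x₁ _ => ?_
          rw [sum_comm]; refine sum_congr rfl fun x₂ _ => ?_
          rw [sum_comm]; refine sum_congr rfl fun x₃ _ => ?_
          rw [mul_sum]; exact sum_congr rfl fun k _ => by ring
    _ = _ := by
          simp only [hV', mul_ite, mul_one, mul_zero, sum_ite_eq, mem_univ, if_true]
          exact sum_congr rfl fun x _ => sum_comm

theorem partialTraceFst_star_kronecker_mul_mul_kronecker [Fintype ι] [Fintype κ] [DecidableEq ι]
    [CommRing R] [StarRing R] (ρ : Matrix (ι × κ) (ι × κ) R) {U : Matrix ι ι R}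
    (hU : U ∈ unitaryGroup ι R) (V : Matrix κ κ R) :
    partialTraceFst (star (U ⊗ₖ V) * ρ * (U ⊗ₖ V)) = star V * partialTraceFst ρ * V := by
  ext k l
  have hU' (i i' : ι) : ∑ s, U i' s * star (U i s) = if i' = i then 1 else 0 := by
    simpa [mul_apply, one_apply] using congr_fun₂ (mem_unitaryGroup_iff.1 hU) i' i
  simp only [partialTraceFst, of_apply, mul_apply, star_apply, kroneckerMap_apply,
    Fintype.sum_prod_type, sum_mul, mul_sum, star_mul']
  calc _ = ∑ x, ∑ x₁, ∑ x₃, ∑ x₂,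
          star (V x₃ k) * ρ (x₂, x₃) (x, x₁) * V x₁ l * ∑ i, U x i * star (U x₂ i) := by
          rw [sum_comm]; refine sum_congr rfl fun x _ => ?_
          rw [sum_comm]; refine sum_congr rfl fun x₁ _ => ?_
          conv_rhs => rw [sum_comm]
          rw [sum_comm]; refine sum_congr rfl fun x₂ _ => ?_
          rw [sum_comm]; refine sum_congr rfl fun x₃ _ => ?_
          rw [mul_sum]; exact sum_congr rfl fun i _ => by ring
    _ = _ := by
          simp only [hU', mul_ite, mul_one, mul_zero, sum_ite_eq, mem_univ, if_true]
          rw [sum_comm]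
          exact sum_congr rfl fun _ _ => sum_comm

theorem PosSemidef.sum_negMulLog_eigenvalues_le_sum_negMulLog_diag_partialTrace [Fintype ι]
    [Fintype κ] [DecidableEq ι] [DecidableEq κ] {ρ : Matrix (ι × κ) (ι × κ) ℂ}
    (hρ : ρ.PosSemidef) (hρ1 : ρ.trace = 1) {U : Matrix ι ι ℂ} (hU : U ∈ unitaryGroup ι ℂ)
    {V : Matrix κ κ ℂ} (hV : V ∈ unitaryGroup κ ℂ) :
    ∑ j, negMulLog (hρ.1.eigenvalues j) ≤
      ∑ a, negMulLog ((star U * partialTraceSnd ρ * U) a a).re +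
        ∑ b, negMulLog ((star V * partialTraceFst ρ * V) b b).re := by
  have hY : U ⊗ₖ V ∈ unitaryGroup (ι × κ) ℂ := kronecker_mem_unitary hU hV
  set q : ι × κ → ℝ := fun j => ((star (U ⊗ₖ V) * ρ * (U ⊗ₖ V)) j j).re
  have hq_nonneg (j) : 0 ≤ q j :=
    (Complex.nonneg_iff.1 (hρ.conjTranspose_mul_mul_same (U ⊗ₖ V)).diag_nonneg).1
  have hq_sum : ∑ j, q j = 1 := by
    simp only [q, ← Complex.re_sum]
    change (trace (star (U ⊗ₖ V) * ρ * (U ⊗ₖ V))).re = 1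
    rw [trace_mul_cycle, mem_unitaryGroup_iff.1 hY, one_mul, hρ1, Complex.one_re]
  have hq_fst (a) : ∑ b, q (a, b) = ((star U * partialTraceSnd ρ * U) a a).re := by
    rw [← partialTraceSnd_star_kronecker_mul_mul_kronecker ρ U hV]
    simp only [q, partialTraceSnd, of_apply, Complex.re_sum]
  have hq_snd (b) : ∑ a, q (a, b) = ((star V * partialTraceFst ρ * V) b b).re := by
    rw [← partialTraceFst_star_kronecker_mul_mul_kronecker ρ hU V]
    simp only [q, partialTraceFst, of_apply, Complex.re_sum]
  calc ∑ j, negMulLog (hρ.1.eigenvalues j) ≤ ∑ j, negMulLog (q j) :=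
        hρ.sum_negMulLog_eigenvalues_le_sum_negMulLog_diag hY
    _ ≤ ∑ a, negMulLog (∑ b, q (a, b)) + ∑ b, negMulLog (∑ a, q (a, b)) :=
        sum_negMulLog_le_sum_negMulLog_marginals hq_nonneg hq_sum
    _ = _ := by simp only [hq_fst, hq_snd]

end Matrix

theorem vnEntropy_eq_sum_negMulLog {ι : Type*} [Fintype ι] [DecidableEq ι] {A : Matrix ι ι ℂ}
    (hA : A.IsHermitian) : vnEntropy A = ∑ i, negMulLog (hA.eigenvalues i) := by
  simp [vnEntropy, hA, negMulLog, sum_neg_distrib]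

/-- **Subadditivity of the von Neumann entropy**: `S(ρ_AB) ≤ S(ρ_A) + S(ρ_B)` where
`ρ_A`, `ρ_B` are the partial traces of the density matrix `ρ_AB` on `ℂ^m ⊗ ℂ^n`. -/
theorem stmt_17 (m n : ℕ) (ρ : Matrix (Fin m × Fin n) (Fin m × Fin n) ℂ)
    (hρ : ρ.PosSemidef) (hρ1 : ρ.trace = 1) :
    vnEntropy ρ ≤
      vnEntropy (Matrix.of fun i j : Fin m => ∑ l, ρ (i, l) (j, l)) +
      vnEntropy (Matrix.of fun s t : Fin n => ∑ i, ρ (i, s) (i, t)) := by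
  change vnEntropy ρ ≤ vnEntropy (partialTraceSnd ρ) + vnEntropy (partialTraceFst ρ)
  have hA := hρ.1.partialTraceSnd
  have hB := hρ.1.partialTraceFst
  calc vnEntropy ρ = ∑ j, negMulLog (hρ.1.eigenvalues j) := vnEntropy_eq_sum_negMulLog hρ.1
    _ ≤ _ := hρ.sum_negMulLog_eigenvalues_le_sum_negMulLog_diag_partialTrace hρ1
        hA.eigenvectorUnitary.2 hB.eigenvectorUnitary.2
    _ = vnEntropy (partialTraceSnd ρ) + vnEntropy (partialTraceFst ρ) := by
        simp only [hA.star_eigenvectorUnitary_mul_mul_apply_self,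
          hB.star_eigenvectorUnitary_mul_mul_apply_self, Complex.ofReal_re,
          vnEntropy_eq_sum_negMulLog hA, vnEntropy_eq_sum_negMulLog hB]
end

section
/- For Hermitian d×d matrices A and B, Tr(exp(A+B)) ≤ Tr(exp(A) exp(B)). (Golden–Thompson inequality.) -/
/-!
Along `n = 2 ^ k` the Lie product formula `exp (A + B) = lim (exp (A / n) * exp (B / n)) ^ n`
reduces the inequality to `Re Tr ((U V) ^ (2 ^ k)) ≤ Re Tr (U ^ (2 ^ k) V ^ (2 ^ k))` for the
Hermitian matrices `U = exp (A / 2 ^ k)`, `V = exp (B / 2 ^ k)`. That trace inequality is proved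
by doubling the exponent, together with `Re Tr (Yᴴ ^ m Y ^ m) ≤ Re Tr ((Yᴴ Y) ^ m)` for arbitrary
`Y`: each doubling step combines cyclicity of the trace with
`2 Re Tr (Xᴴ Y) ≤ Tr (Xᴴ X) + Tr (Yᴴ Y)`.

The Lie product formula itself holds because `t ↦ exp (t x) * exp (t y)` and `t ↦ exp (t (x + y))`
are both `1 + t (x + y) + o(t)`, and `‖aⁿ - bⁿ‖ ≤ n Mⁿ⁻¹ ‖a - b‖` turns an `o(1/n)` gap
between the factors into a vanishing gap between the `n`-th powers.
-/

open Matrix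
open scoped ComplexOrder

namespace Matrix

variable {𝕜 n : Type*} [RCLike 𝕜] [Fintype n]

open RCLike

theorem re_trace_conjTranspose_mul_comm (X Y : Matrix n n 𝕜) :
    re (Yᴴ * X).trace = re (Xᴴ * Y).trace := by
  rw [← conjTranspose_conjTranspose X, ← conjTranspose_mul, trace_conjTranspose,
    conjTranspose_conjTranspose, star_def, conj_re]

theorem re_trace_conjTranspose_mul_self_nonneg (X : Matrix n n 𝕜) :
    0 ≤ re (Xᴴ * X).trace :=
  (nonneg_iff.mp (posSemidef_conjTranspose_mul_self X).trace_nonneg).1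

theorem two_mul_re_trace_conjTranspose_mul_le (X Y : Matrix n n 𝕜) :
    2 * re (Xᴴ * Y).trace ≤ re (Xᴴ * X).trace + re (Yᴴ * Y).trace := by
  have h := re_trace_conjTranspose_mul_self_nonneg (X - Y)
  simp only [conjTranspose_sub, sub_mul, mul_sub, trace_sub, map_sub] at h
  rw [re_trace_conjTranspose_mul_comm X Y] at h
  linarith

theorem re_trace_mul_self_le (W : Matrix n n 𝕜) : re (W * W).trace ≤ re (Wᴴ * W).trace := by
  have h := two_mul_re_trace_conjTranspose_mul_le Wᴴ W
  rw [conjTranspose_conjTranspose, trace_mul_comm W Wᴴ] at h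
  linarith

theorem IsHermitian.im_trace_eq_zero {A : Matrix n n 𝕜} (hA : A.IsHermitian) :
    im A.trace = 0 :=
  conj_eq_iff_im.mp (by rw [← star_def, ← trace_conjTranspose, hA.eq])

theorem im_trace_mul_eq_zero {U V : Matrix n n 𝕜} (hU : U.IsHermitian) (hV : V.IsHermitian) :
    im (U * V).trace = 0 :=
  conj_eq_iff_im.mp (by
    rw [← star_def, ← trace_conjTranspose, conjTranspose_mul, hU.eq, hV.eq, trace_mul_comm])

variable [DecidableEq n]

theorem trace_mul_pow_comm {R : Type*} [CommSemiring R] (X Y : Matrix n n R) (m : ℕ) :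
    ((X * Y) ^ m).trace = ((Y * X) ^ m).trace := by
  cases m with
  | zero => rfl
  | succ m =>
    rw [pow_succ, ← mul_assoc, mul_pow_mul, mul_assoc, trace_mul_comm, mul_assoc, ← pow_succ]

variable (𝕜 n)

def TraceConjPowLE (m : ℕ) : Prop :=
  ∀ Y : Matrix n n 𝕜, re (Yᴴ ^ m * Y ^ m).trace ≤ re ((Yᴴ * Y) ^ m).trace

def TraceHermitianPowLE (m : ℕ) : Prop :=
  ∀ U V : Matrix n n 𝕜, U.IsHermitian → V.IsHermitian →
    re ((U * V) ^ m).trace ≤ re (U ^ m * V ^ m).trace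

variable {𝕜 n}

theorem TraceConjPowLE.two_mul {m : ℕ} (hP : TraceConjPowLE 𝕜 n m)
    (hQ : TraceHermitianPowLE 𝕜 n m) : TraceConjPowLE 𝕜 n (2 * m) := by
  intro Y
  have hU : (Y * Yᴴ).IsHermitian := isHermitian_mul_conjTranspose_self Y
  have hV : (Yᴴ * Y).IsHermitian := isHermitian_conjTranspose_mul_self Y
  have hUV := two_mul_re_trace_conjTranspose_mul_le ((Y * Yᴴ) ^ m) ((Yᴴ * Y) ^ m)
  rw [(hU.pow m).eq, (hV.pow m).eq, ← pow_add, ← pow_add, ← _root_.two_mul,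
    trace_mul_pow_comm] at hUV
  calc re (Yᴴ ^ (2 * m) * Y ^ (2 * m)).trace
      = re ((Y ^ 2)ᴴ ^ m * (Y ^ 2) ^ m).trace := by
        rw [conjTranspose_pow, ← pow_mul, ← pow_mul]
    _ ≤ re (((Y ^ 2)ᴴ * Y ^ 2) ^ m).trace := hP _
    _ = re ((Y * Yᴴ * (Yᴴ * Y)) ^ m).trace := by
        rw [conjTranspose_pow, sq, sq, ← mul_assoc, trace_mul_pow_comm, mul_assoc, mul_assoc,
          ← mul_assoc Y]
    _ ≤ re ((Y * Yᴴ) ^ m * (Yᴴ * Y) ^ m).trace := hQ _ _ hU hV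
    _ ≤ re ((Yᴴ * Y) ^ (2 * m)).trace := by linarith

theorem TraceHermitianPowLE.two_mul {m : ℕ} (hP : TraceConjPowLE 𝕜 n m)
    (hQ : TraceHermitianPowLE 𝕜 n m) : TraceHermitianPowLE 𝕜 n (2 * m) := by
  intro U V hU hV
  have hUV : (U * V)ᴴ = V * U := by rw [conjTranspose_mul, hU.eq, hV.eq]
  calc re ((U * V) ^ (2 * m)).trace
      = re ((U * V) ^ m * (U * V) ^ m).trace := by rw [← pow_add, _root_.two_mul]
    _ ≤ re ((U * V)ᴴ ^ m * (U * V) ^ m).trace := by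
        simpa only [conjTranspose_pow] using re_trace_mul_self_le ((U * V) ^ m)
    _ ≤ re (((U * V)ᴴ * (U * V)) ^ m).trace := hP _
    _ = re ((U ^ 2 * V ^ 2) ^ m).trace := by
        rw [hUV, sq, sq, mul_assoc, ← mul_assoc U, ← mul_assoc, trace_mul_pow_comm, ← mul_assoc,
          trace_mul_pow_comm]
    _ ≤ re ((U ^ 2) ^ m * (V ^ 2) ^ m).trace := hQ _ _ (hU.pow 2) (hV.pow 2)
    _ = re (U ^ (2 * m) * V ^ (2 * m)).trace := by rw [← pow_mul, ← pow_mul]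

theorem traceConjPowLE_two_pow_and_traceHermitianPowLE_two_pow (k : ℕ) :
    TraceConjPowLE 𝕜 n (2 ^ k) ∧ TraceHermitianPowLE 𝕜 n (2 ^ k) := by
  induction k with
  | zero => exact ⟨fun Y => by simp, fun U V _ _ => by simp⟩
  | succ k ih => rw [pow_succ']; exact ⟨ih.1.two_mul ih.2, ih.2.two_mul ih.1⟩

theorem re_trace_mul_pow_two_pow_le {U V : Matrix n n 𝕜} (hU : U.IsHermitian)
    (hV : V.IsHermitian) (k : ℕ) :
    re ((U * V) ^ 2 ^ k).trace ≤ re (U ^ 2 ^ k * V ^ 2 ^ k).trace :=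
  (traceConjPowLE_two_pow_and_traceHermitianPowLE_two_pow k).2 U V hU hV

end Matrix

open NormedSpace Filter Topology

theorem HasDerivAt.tendsto_natCast_smul_sub {E : Type*} [NormedAddCommGroup E] [NormedSpace ℝ E]
    {F : ℝ → E} {z : E} (hF : HasDerivAt F z 0) :
    Tendsto (fun n : ℕ => (n : ℝ) • (F (n : ℝ)⁻¹ - F 0)) atTop (𝓝 z) := by
  simpa [Function.comp_def] using hF.tendsto_slope_zero_right.comp
    (tendsto_inv_atTop_nhdsGT_zero.comp tendsto_natCast_atTop_atTop)

section LieProduct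

variable {𝔸 : Type*} [NormedRing 𝔸] [NormOneClass 𝔸]

theorem norm_pow_sub_pow_le {a b : 𝔸} {M : ℝ} (ha : ‖a‖ ≤ M) (hb : ‖b‖ ≤ M) (n : ℕ) :
    ‖a ^ n - b ^ n‖ ≤ n * M ^ (n - 1) * ‖a - b‖ := by
  have hM : 0 ≤ M := (norm_nonneg a).trans ha
  induction n with
  | zero => simp
  | succ n ih =>
    have hbn : ‖b ^ n‖ ≤ M ^ n := (norm_pow_le b n).trans (pow_le_pow_left₀ (norm_nonneg b) hb n)
    have hMn : M * (n * M ^ (n - 1)) = n * M ^ n := by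
      cases n with
      | zero => simp
      | succ n => simp only [Nat.add_sub_cancel, pow_succ]; ring
    calc ‖a ^ (n + 1) - b ^ (n + 1)‖ = ‖a * (a ^ n - b ^ n) + (a - b) * b ^ n‖ := by
          rw [pow_succ', pow_succ']; noncomm_ring
      _ ≤ ‖a‖ * ‖a ^ n - b ^ n‖ + ‖a - b‖ * ‖b ^ n‖ :=
          (norm_add_le _ _).trans (add_le_add (norm_mul_le _ _) (norm_mul_le _ _))
      _ ≤ M * (n * M ^ (n - 1) * ‖a - b‖) + ‖a - b‖ * M ^ n := by gcongr
      _ = (n + 1 : ℕ) * M ^ (n + 1 - 1) * ‖a - b‖ := by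
          rw [Nat.add_sub_cancel, ← mul_assoc, hMn]; push_cast; ring

variable [NormedAlgebra ℝ 𝔸]

theorem eventually_norm_le_exp_div_of_tendsto_smul_sub_one {c : ℕ → 𝔸} {z : 𝔸} {C : ℝ}
    (hc : Tendsto (fun n : ℕ => (n : ℝ) • (c n - 1)) atTop (𝓝 z)) (hzC : ‖z‖ < C) :
    ∀ᶠ n : ℕ in atTop, ‖c n‖ ≤ Real.exp (C / n) := by
  filter_upwards [hc.norm.eventually_le_const hzC, eventually_gt_atTop 0] with n hn hn0
  have hn0' : (0 : ℝ) < n := by exact_mod_cast hn0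
  rw [norm_smul, Real.norm_natCast] at hn
  calc ‖c n‖ ≤ ‖(1 : 𝔸)‖ + ‖c n - 1‖ := norm_le_norm_add_norm_sub' _ _
    _ ≤ C / n + 1 := by rw [norm_one, add_comm]; gcongr; rwa [le_div_iff₀' hn0']
    _ ≤ Real.exp (C / n) := Real.add_one_le_exp _

theorem tendsto_pow_sub_pow_of_tendsto_smul_sub_one {a b : ℕ → 𝔸} {z : 𝔸}
    (ha : Tendsto (fun n : ℕ => (n : ℝ) • (a n - 1)) atTop (𝓝 z))
    (hb : Tendsto (fun n : ℕ => (n : ℝ) • (b n - 1)) atTop (𝓝 z)) :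
    Tendsto (fun n => a n ^ n - b n ^ n) atTop (𝓝 0) := by
  set C := ‖z‖ + 1
  have hzC : ‖z‖ < C := lt_add_one _
  have hdiff : Tendsto (fun n : ℕ => ‖(n : ℝ) • (a n - b n)‖) atTop (𝓝 0) := by
    simpa [← smul_sub] using (ha.sub hb).norm
  refine squeeze_zero_norm' ?_ (by simpa using hdiff.const_mul (Real.exp C))
  filter_upwards [eventually_norm_le_exp_div_of_tendsto_smul_sub_one ha hzC,
    eventually_norm_le_exp_div_of_tendsto_smul_sub_one hb hzC, eventually_gt_atTop 0]
    with n han hbn hn0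
  have hn0' : (n : ℝ) ≠ 0 := by exact_mod_cast hn0.ne'
  have hexp : Real.exp (C / n) ^ n = Real.exp C := by
    rw [← Real.exp_nat_mul, mul_div_cancel₀ _ hn0']
  calc ‖a n ^ n - b n ^ n‖ ≤ n * Real.exp (C / n) ^ (n - 1) * ‖a n - b n‖ :=
        norm_pow_sub_pow_le han hbn n
    _ = Real.exp (C / n) ^ (n - 1) * ‖(n : ℝ) • (a n - b n)‖ := by
        rw [norm_smul, Real.norm_natCast]; ring
    _ ≤ Real.exp C * ‖(n : ℝ) • (a n - b n)‖ := by
        rw [← hexp]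
        gcongr
        · exact Real.one_le_exp (by positivity)
        · exact Nat.sub_le n 1

variable [CompleteSpace 𝔸]

theorem tendsto_exp_smul_mul_exp_smul_pow (x y : 𝔸) :
    Tendsto (fun n : ℕ => (exp ((n : ℝ)⁻¹ • x) * exp ((n : ℝ)⁻¹ • y)) ^ n) atTop
      (𝓝 (exp (x + y))) := by
  let : NormedAlgebra ℚ 𝔸 := NormedAlgebra.restrictScalars ℚ ℝ 𝔸
  have hderiv : HasDerivAt (fun t : ℝ => exp (t • x) * exp (t • y)) (x + y) 0 := by
    simpa using (hasDerivAt_exp_smul_const x (0 : ℝ)).fun_mul (hasDerivAt_exp_smul_const y (0 : ℝ))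
  have hsub := tendsto_pow_sub_pow_of_tendsto_smul_sub_one
    (by simpa using hderiv.tendsto_natCast_smul_sub)
    (by simpa using (hasDerivAt_exp_smul_const (x + y) (0 : ℝ)).tendsto_natCast_smul_sub)
  have hpow : ∀ᶠ n : ℕ in atTop, exp ((n : ℝ)⁻¹ • (x + y)) ^ n = exp (x + y) := by
    filter_upwards [eventually_gt_atTop 0] with n hn
    rw [← NormedSpace.exp_nsmul, ← Nat.cast_smul_eq_nsmul ℝ, smul_smul,
      mul_inv_cancel₀ (by exact_mod_cast hn.ne'), one_smul]
  simpa using hsub.add (tendsto_const_nhds.congr' (hpow.mono fun _ h => h.symm))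

end LieProduct

/-- **Golden–Thompson inequality**: for Hermitian matrices `A`, `B`,
`Tr(exp(A+B)) ≤ Tr(exp A · exp B)`. -/
theorem stmt_18 (d : ℕ) (A B : Matrix (Fin d) (Fin d) ℂ)
    (hA : A.IsHermitian) (hB : B.IsHermitian) :
    (NormedSpace.exp (A + B)).trace ≤
      ((NormedSpace.exp A) * (NormedSpace.exp B)).trace := by
  cases isEmpty_or_nonempty (Fin d)
  · simp [Matrix.trace]
  -- `exp` depends only on the topology, so any submultiplicative norm may be used.
  let : NormedRing (Matrix (Fin d) (Fin d) ℂ) := Matrix.linftyOpNormedRing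
  let : NormedAlgebra ℝ (Matrix (Fin d) (Fin d) ℂ) := Matrix.linftyOpNormedAlgebra
  let : NormOneClass (Matrix (Fin d) (Fin d) ℂ) := Matrix.linfty_opNormOneClass
  have hbound (k : ℕ) :
      ((exp (((2 ^ k : ℕ) : ℝ)⁻¹ • A) * exp (((2 ^ k : ℕ) : ℝ)⁻¹ • B)) ^ 2 ^ k).trace.re ≤
        (exp A * exp B).trace.re := by
    have hpow (M : Matrix (Fin d) (Fin d) ℂ) :
        exp (((2 ^ k : ℕ) : ℝ)⁻¹ • M) ^ 2 ^ k = exp M := by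
      rw [← Matrix.exp_nsmul, ← Nat.cast_smul_eq_nsmul ℝ, smul_smul,
        mul_inv_cancel₀ (by positivity), one_smul]
    have hexp {M : Matrix (Fin d) (Fin d) ℂ} (hM : M.IsHermitian) :
        (exp (((2 ^ k : ℕ) : ℝ)⁻¹ • M)).IsHermitian :=
      (hM.smul (IsSelfAdjoint.all _)).exp
    simpa only [hpow, RCLike.re_to_complex] using re_trace_mul_pow_two_pow_le (hexp hA) (hexp hB) k
  have hlim := ((Continuous.matrix_trace continuous_id).tendsto _).comp
    ((tendsto_exp_smul_mul_exp_smul_pow A B).comp (tendsto_pow_atTop_atTop_of_one_lt one_lt_two))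
  have hre := le_of_tendsto' (Complex.continuous_re.tendsto _ |>.comp hlim) hbound
  refine Complex.le_def.mpr ⟨hre, ?_⟩
  exact (hA.add hB).exp.im_trace_eq_zero.trans (im_trace_mul_eq_zero hA.exp hB.exp).symm
end

section
/- Let ρ_{ABC} be a density matrix on ℂ^a ⊗ ℂ^b ⊗ ℂ^c of the form ρ_{ABC} = ⊕_j q_j ρ_j ⊗ ω_j, where ℂ^b decomposes as an orthogonal direct sum ⊕_j (ℂ^{b_j^L} ⊗ ℂ^{b_j^R}), each ρ_j is a density matrix on ℂ^a ⊗ ℂ^{b_j^L}, each ω_j is a density matrix on ℂ^{b_j^R} ⊗ ℂ^c, and (q_j) is a probability distribution. Then strong subadditivity holds with equality: S(ρ_{AB}) + S(ρ_{BC}) = S(ρ_B) + S(ρ_{ABC}). -/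
open Matrix
open scoped ComplexOrder

/-! After regrouping indices by the block label `j`, each of the four states is block
diagonal with blocks `w_j • (P_j ⊗ Q_j)`, where `P_j` is `ρ_j` or `Tr_A ρ_j` and `Q_j` is
`ω_j` or `Tr_C ω_j`. The eigenvalues of such a block are the products `w_j λ μ` of `w_j` with
eigenvalues `λ` of `P_j` and `μ` of `Q_j`, and since `η(x) = -x log x` satisfies
`η(xy) = y η(x) + x η(y)`, its entropy is `tr P tr Q η(w_j) + w_j tr Q S(P) + w_j tr P S(Q)`.
Partial traces preserve the trace, so both sides of the identity expand to the same sum. -/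

open Polynomial Real
open scoped Kronecker

theorem Matrix.charpoly_mul_mul_of_mul_eq_one {R ι : Type*} [CommRing R] [Fintype ι]
    [DecidableEq ι] {U V : Matrix ι ι R} (hVU : V * U = 1) (A : Matrix ι ι R) :
    (U * A * V).charpoly = A.charpoly := by
  rw [charpoly_mul_comm, ← mul_assoc, hVU, one_mul]

theorem sum_negMulLog_mul_mul {ι κ : Type*} [Fintype ι] [Fintype κ] (w : ℝ) (x : ι → ℝ)
    (y : κ → ℝ) :
    ∑ p : ι × κ, negMulLog (w * x p.1 * y p.2) =
      (∑ i, x i) * (∑ k, y k) * negMulLog w + w * (∑ k, y k) * ∑ i, negMulLog (x i) +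
        w * (∑ i, x i) * ∑ k, negMulLog (y k) := by
  simp only [negMulLog_mul, Fintype.sum_prod_type, Finset.sum_add_distrib, ← Finset.sum_mul,
    ← Finset.mul_sum]
  ring

namespace Matrix.IsHermitian

variable {ι : Type*} [Fintype ι] [DecidableEq ι] {A : Matrix ι ι ℂ}

theorem vnEntropy_eq (hA : A.IsHermitian) : vnEntropy A = ∑ i, negMulLog (hA.eigenvalues i) := by
  simp [vnEntropy, hA, negMulLog]

theorem re_trace_eq_sum_eigenvalues (hA : A.IsHermitian) : A.trace.re = ∑ i, hA.eigenvalues i := by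
  simp [hA.trace_eq_sum_eigenvalues]

theorem vnEntropy_eq_sum_negMulLog_of_charpoly {κ : Type*} [Fintype κ] (hA : A.IsHermitian)
    (d : κ → ℝ) (hd : A.charpoly = ∏ k, (X - C (d k : ℂ))) :
    vnEntropy A = ∑ k, negMulLog (d k) := by
  have hroots : Finset.univ.val.map (RCLike.ofReal ∘ hA.eigenvalues) =
      Finset.univ.val.map (fun k => (d k : ℂ)) := by
    rw [← hA.roots_charpoly_eq_eigenvalues, hd, Finset.prod_eq_multiset_prod,
      ← roots_multiset_prod_X_sub_C (Finset.univ.val.map fun k => (d k : ℂ)), Multiset.map_map]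
    rfl
  have hsum := congrArg (fun s => (s.map fun z : ℂ => negMulLog z.re).sum) hroots
  simpa [Multiset.map_map, hA.vnEntropy_eq] using hsum

end Matrix.IsHermitian

theorem vnEntropy_reindex {ι κ : Type*} [Fintype ι] [DecidableEq ι] [Fintype κ] [DecidableEq κ]
    (e : ι ≃ κ) (A : Matrix ι ι ℂ) : vnEntropy (reindex e e A) = vnEntropy A := by
  by_cases hA : A.IsHermitian
  · rw [hA.vnEntropy_eq, (hA.reindex e).vnEntropy_eq_sum_negMulLog_of_charpoly hA.eigenvalues
      (by rw [charpoly_reindex, hA.charpoly_eq]; rfl)]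
  · simp [vnEntropy, hA]

namespace Matrix.IsHermitian

theorem smul_kronecker {m n : Type*} {P : Matrix m m ℂ} {Q : Matrix n n ℂ} (w : ℝ)
    (hP : P.IsHermitian) (hQ : Q.IsHermitian) : ((w : ℂ) • (P ⊗ₖ Q)).IsHermitian := by
  refine IsHermitian.smul ?_ (by simp [IsSelfAdjoint])
  rw [IsHermitian, conjTranspose_kronecker, hP.eq, hQ.eq]

variable {m n : Type*} [Fintype m] [DecidableEq m] [Fintype n] [DecidableEq n]
  {P : Matrix m m ℂ} {Q : Matrix n n ℂ}

theorem smul_kronecker_eq_conj_diagonal (w : ℝ) (hP : P.IsHermitian) (hQ : Q.IsHermitian) :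
    (w : ℂ) • (P ⊗ₖ Q) =
      ((hP.eigenvectorUnitary : Matrix m m ℂ) ⊗ₖ (hQ.eigenvectorUnitary : Matrix n n ℂ)) *
        diagonal (fun p => ((w * hP.eigenvalues p.1 * hQ.eigenvalues p.2 : ℝ) : ℂ)) *
        (star (hP.eigenvectorUnitary : Matrix m m ℂ) ⊗ₖ
          star (hQ.eigenvectorUnitary : Matrix n n ℂ)) := by
  have hD : diagonal (fun p : m × n => ((w * hP.eigenvalues p.1 * hQ.eigenvalues p.2 : ℝ) : ℂ)) =
      (w : ℂ) • (diagonal (RCLike.ofReal ∘ hP.eigenvalues) ⊗ₖ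
        diagonal (RCLike.ofReal ∘ hQ.eigenvalues)) := by
    rw [diagonal_kronecker_diagonal, ← diagonal_smul]
    congr 1
    ext p
    simp [mul_assoc]
  conv_lhs => rw [hP.spectral_theorem, hQ.spectral_theorem]
  rw [hD, Matrix.mul_smul, Matrix.smul_mul, ← mul_kronecker_mul, ← mul_kronecker_mul]
  rfl

end Matrix.IsHermitian

section BlockProduct

variable {J : Type*} [DecidableEq J] {m n : J → Type*} (w : J → ℝ)
  {P : ∀ j, Matrix (m j) (m j) ℂ} {Q : ∀ j, Matrix (n j) (n j) ℂ}

theorem isHermitian_blockDiagonal'_smul_kronecker (hP : ∀ j, (P j).IsHermitian)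
    (hQ : ∀ j, (Q j).IsHermitian) :
    (blockDiagonal' fun j => (w j : ℂ) • (P j ⊗ₖ Q j)).IsHermitian := by
  rw [IsHermitian, blockDiagonal'_conjTranspose]
  exact congrArg blockDiagonal' (funext fun j => ((hP j).smul_kronecker (w j) (hQ j)).eq)

variable [Fintype J] [∀ j, Fintype (m j)] [∀ j, DecidableEq (m j)] [∀ j, Fintype (n j)]
  [∀ j, DecidableEq (n j)]

theorem charpoly_blockDiagonal'_smul_kronecker (hP : ∀ j, (P j).IsHermitian)
    (hQ : ∀ j, (Q j).IsHermitian) :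
    (blockDiagonal' fun j => (w j : ℂ) • (P j ⊗ₖ Q j)).charpoly =
      ∏ q : Σ j, m j × n j,
        (X - C ((w q.1 * (hP q.1).eigenvalues q.2.1 * (hQ q.1).eigenvalues q.2.2 : ℝ) : ℂ)) := by
  rw [funext fun j => (hP j).smul_kronecker_eq_conj_diagonal (w j) (hQ j), blockDiagonal'_mul,
    blockDiagonal'_mul, blockDiagonal'_diagonal, charpoly_mul_mul_of_mul_eq_one, charpoly_diagonal]
  rw [← blockDiagonal'_mul, ← blockDiagonal'_one]
  congr 1
  ext1 j
  rw [← mul_kronecker_mul, Unitary.star_mul_self_of_mem (hP j).eigenvectorUnitary.2,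
    Unitary.star_mul_self_of_mem (hQ j).eigenvectorUnitary.2, one_kronecker_one, Pi.one_apply]

theorem vnEntropy_blockDiagonal'_smul_kronecker (hP : ∀ j, (P j).IsHermitian)
    (hQ : ∀ j, (Q j).IsHermitian) :
    vnEntropy (blockDiagonal' fun j => (w j : ℂ) • (P j ⊗ₖ Q j)) =
      ∑ j, ((P j).trace.re * (Q j).trace.re * negMulLog (w j) +
        w j * (Q j).trace.re * vnEntropy (P j) + w j * (P j).trace.re * vnEntropy (Q j)) := by
  rw [(isHermitian_blockDiagonal'_smul_kronecker w hP hQ).vnEntropy_eq_sum_negMulLog_of_charpoly _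
    (charpoly_blockDiagonal'_smul_kronecker w hP hQ), Fintype.sum_sigma]
  refine Finset.sum_congr rfl fun j _ => ?_
  rw [(hP j).re_trace_eq_sum_eigenvalues, (hQ j).re_trace_eq_sum_eigenvalues,
    (hP j).vnEntropy_eq, (hQ j).vnEntropy_eq]
  exact sum_negMulLog_mul_mul (w j) (hP j).eigenvalues (hQ j).eigenvalues

end BlockProduct

section PartialTrace

variable {R : Type*} [AddCommMonoid R] {m n : Type*}

def partialTraceRight [Fintype n] (M : Matrix (m × n) (m × n) R) : Matrix m m R :=
  of fun i i' => ∑ k, M (i, k) (i', k)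

def partialTraceLeft [Fintype m] (M : Matrix (m × n) (m × n) R) : Matrix n n R :=
  of fun k k' => ∑ i, M (i, k) (i, k')

theorem trace_partialTraceRight [Fintype m] [Fintype n] (M : Matrix (m × n) (m × n) R) :
    (partialTraceRight M).trace = M.trace := by
  simp [partialTraceRight, trace, Fintype.sum_prod_type]

theorem trace_partialTraceLeft [Fintype m] [Fintype n] (M : Matrix (m × n) (m × n) R) :
    (partialTraceLeft M).trace = M.trace := by
  simp [partialTraceLeft, trace, Fintype.sum_prod_type, Finset.sum_comm (γ := m)]

variable [StarAddMonoid R] {M : Matrix (m × n) (m × n) R}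

theorem Matrix.IsHermitian.partialTraceRight [Fintype n] (hM : M.IsHermitian) :
    (partialTraceRight M).IsHermitian := by
  ext i i'
  simp only [conjTranspose_apply, _root_.partialTraceRight, of_apply, star_sum, hM.apply]

theorem Matrix.IsHermitian.partialTraceLeft [Fintype m] (hM : M.IsHermitian) :
    (partialTraceLeft M).IsHermitian := by
  ext k k'
  simp only [conjTranspose_apply, _root_.partialTraceLeft, of_apply, star_sum, hM.apply]

end PartialTrace

section Regroup

variable {J α γ : Type*} (L R : J → Type*)

def regroupABC : α × (Σ j, L j × R j) × γ ≃ Σ j, (α × L j) × (R j × γ) where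
  toFun p := ⟨p.2.1.1, (p.1, p.2.1.2.1), (p.2.1.2.2, p.2.2)⟩
  invFun q := (q.2.1.1, ⟨q.1, q.2.1.2, q.2.2.1⟩, q.2.2.2)

def regroupAB : α × (Σ j, L j × R j) ≃ Σ j, (α × L j) × R j where
  toFun p := ⟨p.2.1, (p.1, p.2.2.1), p.2.2.2⟩
  invFun q := (q.2.1.1, ⟨q.1, q.2.1.2, q.2.2⟩)

def regroupBC : (Σ j, L j × R j) × γ ≃ Σ j, L j × (R j × γ) where
  toFun p := ⟨p.1.1, p.1.2.1, (p.1.2.2, p.2)⟩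
  invFun q := (⟨q.1, q.2.1, q.2.2.1⟩, q.2.2.2)

end Regroup

section BlockProductState

variable {a c t : ℕ} {bL bR : Fin t → ℕ} {w : Fin t → ℝ}
  {ρ : ∀ j : Fin t, Matrix (Fin a × Fin (bL j)) (Fin a × Fin (bL j)) ℂ}
  {ω : ∀ j : Fin t, Matrix (Fin (bR j) × Fin c) (Fin (bR j) × Fin c) ℂ}
  {ρABC : Matrix (Fin a × (Σ j : Fin t, Fin (bL j) × Fin (bR j)) × Fin c)
    (Fin a × (Σ j : Fin t, Fin (bL j) × Fin (bR j)) × Fin c) ℂ}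
  (hABC : ∀ (i i' : Fin a) (k k' : Fin c) (j j' : Fin t)
    (l : Fin (bL j)) (r : Fin (bR j)) (l' : Fin (bL j')) (r' : Fin (bR j')),
    ρABC (i, ⟨j, l, r⟩, k) (i', ⟨j', l', r'⟩, k') =
      if h : j = j' then
        (w j : ℂ) * ρ j (i, l) (i', Fin.cast (congrArg bL h.symm) l') *
          ω j (r, k) (Fin.cast (congrArg bR h.symm) r', k')
      else 0)
include hABC

theorem reindex_regroupABC_eq :
    reindex (regroupABC _ _) (regroupABC _ _) ρABC =
      blockDiagonal' fun j => (w j : ℂ) • (ρ j ⊗ₖ ω j) := by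
  ext ⟨j, ⟨i, l⟩, ⟨r, k⟩⟩ ⟨j', ⟨i', l'⟩, ⟨r', k'⟩⟩
  obtain rfl | h := eq_or_ne j j'
  · simp [regroupABC, hABC, mul_assoc]
  · simp [regroupABC, hABC, h, blockDiagonal'_apply_ne]

theorem reindex_regroupAB_eq :
    reindex (regroupAB _ _) (regroupAB _ _)
        (of fun (p p' : Fin a × (Σ j : Fin t, Fin (bL j) × Fin (bR j))) =>
          ∑ k, ρABC (p.1, p.2, k) (p'.1, p'.2, k)) =
      blockDiagonal' fun j => (w j : ℂ) • (ρ j ⊗ₖ partialTraceRight (ω j)) := by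
  ext ⟨j, ⟨i, l⟩, r⟩ ⟨j', ⟨i', l'⟩, r'⟩
  obtain rfl | h := eq_or_ne j j'
  · simp [regroupAB, hABC, partialTraceRight, Finset.mul_sum, mul_assoc]
  · simp [regroupAB, hABC, h, blockDiagonal'_apply_ne]

theorem reindex_regroupBC_eq :
    reindex (regroupBC _ _) (regroupBC _ _)
        (of fun (p p' : (Σ j : Fin t, Fin (bL j) × Fin (bR j)) × Fin c) =>
          ∑ i, ρABC (i, p.1, p.2) (i, p'.1, p'.2)) =
      blockDiagonal' fun j => (w j : ℂ) • (partialTraceLeft (ρ j) ⊗ₖ ω j) := by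
  ext ⟨j, l, ⟨r, k⟩⟩ ⟨j', l', ⟨r', k'⟩⟩
  obtain rfl | h := eq_or_ne j j'
  · simp [regroupBC, hABC, partialTraceLeft, Finset.mul_sum, Finset.sum_mul, mul_assoc]
  · simp [regroupBC, hABC, h, blockDiagonal'_apply_ne]

theorem of_sum_sum_eq_blockDiagonal' :
    (of fun (s s' : Σ j : Fin t, Fin (bL j) × Fin (bR j)) =>
        ∑ i, ∑ k, ρABC (i, s, k) (i, s', k)) =
      blockDiagonal' fun j => (w j : ℂ) • (partialTraceLeft (ρ j) ⊗ₖ partialTraceRight (ω j)) := by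
  ext ⟨j, l, r⟩ ⟨j', l', r'⟩
  obtain rfl | h := eq_or_ne j j'
  · simp [hABC, partialTraceLeft, partialTraceRight, Finset.mul_sum, Finset.sum_mul, mul_assoc]
    exact Finset.sum_comm
  · simp [hABC, h, blockDiagonal'_apply_ne]

end BlockProductState

theorem stmt_19_general (a c t : ℕ) (bL bR : Fin t → ℕ)
    (w : Fin t → ℝ)
    (ρ : ∀ j : Fin t, Matrix (Fin a × Fin (bL j)) (Fin a × Fin (bL j)) ℂ)
    (ω : ∀ j : Fin t, Matrix (Fin (bR j) × Fin c) (Fin (bR j) × Fin c) ℂ)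
    (hρ : ∀ j, (ρ j).PosSemidef)
    (hω : ∀ j, (ω j).PosSemidef)
    (ρABC : Matrix (Fin a × (Σ j : Fin t, Fin (bL j) × Fin (bR j)) × Fin c)
                   (Fin a × (Σ j : Fin t, Fin (bL j) × Fin (bR j)) × Fin c) ℂ)
    (hABC : ∀ (i i' : Fin a) (k k' : Fin c) (j j' : Fin t)
        (l : Fin (bL j)) (r : Fin (bR j)) (l' : Fin (bL j')) (r' : Fin (bR j')),
        ρABC (i, ⟨j, l, r⟩, k) (i', ⟨j', l', r'⟩, k') =
          if h : j = j' then
            (w j : ℂ) * ρ j (i, l) (i', Fin.cast (congrArg bL h.symm) l') *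
              ω j (r, k) (Fin.cast (congrArg bR h.symm) r', k')
          else 0) :
    vnEntropy (Matrix.of
        fun (p p' : Fin a × (Σ j : Fin t, Fin (bL j) × Fin (bR j))) =>
          ∑ k, ρABC (p.1, p.2, k) (p'.1, p'.2, k)) +
    vnEntropy (Matrix.of
        fun (p p' : (Σ j : Fin t, Fin (bL j) × Fin (bR j)) × Fin c) =>
          ∑ i, ρABC (i, p.1, p.2) (i, p'.1, p'.2)) =
    vnEntropy (Matrix.of
        fun (s s' : Σ j : Fin t, Fin (bL j) × Fin (bR j)) =>
          ∑ i, ∑ k, ρABC (i, s, k) (i, s', k)) +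
    vnEntropy ρABC := by
  have hρH j := (hρ j).isHermitian
  have hωH j := (hω j).isHermitian
  rw [← vnEntropy_reindex (regroupAB (α := Fin a) _ _), reindex_regroupAB_eq hABC,
    ← vnEntropy_reindex (regroupBC (γ := Fin c) _ _), reindex_regroupBC_eq hABC,
    of_sum_sum_eq_blockDiagonal' hABC, ← vnEntropy_reindex (regroupABC _ _) ρABC,
    reindex_regroupABC_eq hABC,
    vnEntropy_blockDiagonal'_smul_kronecker w hρH fun j => (hωH j).partialTraceRight,
    vnEntropy_blockDiagonal'_smul_kronecker w (fun j => (hρH j).partialTraceLeft) hωH,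
    vnEntropy_blockDiagonal'_smul_kronecker w (fun j => (hρH j).partialTraceLeft)
      fun j => (hωH j).partialTraceRight,
    vnEntropy_blockDiagonal'_smul_kronecker w hρH hωH, ← Finset.sum_add_distrib,
    ← Finset.sum_add_distrib]
  refine Finset.sum_congr rfl fun j _ => ?_
  rw [trace_partialTraceLeft, trace_partialTraceRight]
  ring

/-- If a density matrix `ρ_ABC` on `ℂ^a ⊗ ℂ^b ⊗ ℂ^c` is of the form
`⊕_j w_j ρ_j ⊗ ω_j` along an orthogonal direct sum decomposition
`ℂ^b = ⊕_j (ℂ^{bL_j} ⊗ ℂ^{bR_j})` of the middle factor (the middle index set being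
`Σ j, Fin (bL j) × Fin (bR j)`), with `ρ_j` density matrices on `ℂ^a ⊗ ℂ^{bL_j}`,
`ω_j` density matrices on `ℂ^{bR_j} ⊗ ℂ^c`, and `(w_j)` a probability distribution, then
strong subadditivity holds with equality: `S(ρ_AB) + S(ρ_BC) = S(ρ_B) + S(ρ_ABC)`. -/
theorem stmt_19 (a c t : ℕ) (bL bR : Fin t → ℕ)
    (w : Fin t → ℝ) (hw : ∀ j, 0 ≤ w j) (hw1 : ∑ j, w j = 1)
    (ρ : ∀ j : Fin t, Matrix (Fin a × Fin (bL j)) (Fin a × Fin (bL j)) ℂ)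
    (ω : ∀ j : Fin t, Matrix (Fin (bR j) × Fin c) (Fin (bR j) × Fin c) ℂ)
    (hρ : ∀ j, (ρ j).PosSemidef) (hρ1 : ∀ j, (ρ j).trace = 1)
    (hω : ∀ j, (ω j).PosSemidef) (hω1 : ∀ j, (ω j).trace = 1)
    (ρABC : Matrix (Fin a × (Σ j : Fin t, Fin (bL j) × Fin (bR j)) × Fin c)
                   (Fin a × (Σ j : Fin t, Fin (bL j) × Fin (bR j)) × Fin c) ℂ)
    (hABC : ∀ (i i' : Fin a) (k k' : Fin c) (j j' : Fin t)
        (l : Fin (bL j)) (r : Fin (bR j)) (l' : Fin (bL j')) (r' : Fin (bR j')),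
        ρABC (i, ⟨j, l, r⟩, k) (i', ⟨j', l', r'⟩, k') =
          if h : j = j' then
            (w j : ℂ) * ρ j (i, l) (i', Fin.cast (congrArg bL h.symm) l') *
              ω j (r, k) (Fin.cast (congrArg bR h.symm) r', k')
          else 0) :
    vnEntropy (Matrix.of
        fun (p p' : Fin a × (Σ j : Fin t, Fin (bL j) × Fin (bR j))) =>
          ∑ k, ρABC (p.1, p.2, k) (p'.1, p'.2, k)) +
    vnEntropy (Matrix.of
        fun (p p' : (Σ j : Fin t, Fin (bL j) × Fin (bR j)) × Fin c) =>
          ∑ i, ρABC (i, p.1, p.2) (i, p'.1, p'.2)) =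
    vnEntropy (Matrix.of
        fun (s s' : Σ j : Fin t, Fin (bL j) × Fin (bR j)) =>
          ∑ i, ∑ k, ρABC (i, s, k) (i, s', k)) +
    vnEntropy ρABC :=
  stmt_19_general a c t bL bR w ρ ω hρ hω ρABC hABC
end
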